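/- arXiv:2411.08536 — 5 statements merged into one kernel-verified Lean document; each statement's English description precedes it below -/
import Mathlib

section
/- The multiple zeta series ζ(s₁,…,s_k) = Σ_{n₁>⋯>n_k>0} 1/(n₁^{s₁}⋯n_k^{s_k}) with integer arguments s₁,…,s_k ∈ ℤ converges if s₁+⋯+s_j > j for all j = 1,…,k. -/
/-!
Sum out the largest index first: for `s₁ ≥ 2` one has `∑_{n₁ > n₂} n₁^{-s₁} ≤ 2 n₂^{1-s₁}`, so the
series for `(s₁, s₂, …, s_k)` is dominated by twice the series for `(s₁ + s₂ - 1, s₃, …, s_k)`. The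
partial sums of the new exponent vector are those of the old one shifted by one index and lowered by
one, so the hypothesis `s₁ + ⋯ + s_j > j` is inherited, and induction on `k` concludes.
-/

open Finset

theorem Fin.sum_Iic_succ {M : Type*} [AddCommMonoid M] {k : ℕ} (f : Fin (k + 1) → M) (j : Fin k) :
    ∑ i ∈ Iic j.succ, f i = f 0 + ∑ i ∈ Iic j, f i.succ := by
  rw [← Icc_bot, Icc_eq_cons_Ioc bot_le, Finset.sum_cons, _root_.bot_eq_zero, ← map_succEmb_Iic,
    sum_map]
  rfl

theorem tsum_indicator_Ioi_zpow_inv_le {s : ℤ} (hs : 2 ≤ s) {N : ℕ} (hN : 0 < N) :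
    ∑' a : ℕ, (Set.Ioi N).indicator (fun a : ℕ => ((a : ℝ) ^ s)⁻¹) a
      ≤ 2 * ((N : ℝ) ^ (s - 1))⁻¹ := by
  obtain ⟨m, rfl⟩ : ∃ m : ℕ, s = m + 2 := ⟨(s - 2).toNat, by omega⟩
  have hN' : (0 : ℝ) < N := by exact_mod_cast hN
  have hterm : ∀ a : ℕ, (Set.Ioi N).indicator (fun a : ℕ => ((a : ℝ) ^ ((m : ℤ) + 2))⁻¹) a
      ≤ ((N : ℝ) ^ m)⁻¹ * (Set.Ioi N).indicator (fun a : ℕ => ((a : ℝ) ^ 2)⁻¹) a := by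
    intro a
    by_cases ha : N < a
    · have ha' : (N : ℝ) ≤ a := by exact_mod_cast ha.le
      have ha0 : (0 : ℝ) < a := hN'.trans_le ha'
      simp only [Set.indicator_of_mem (Set.mem_Ioi.2 ha), ← mul_inv]
      rw [show ((m : ℤ) + 2) = ((m + 2 : ℕ) : ℤ) by push_cast; ring, zpow_natCast, pow_add]
      gcongr
    · simp [Set.indicator_of_notMem (show a ∉ Set.Ioi N from ha)]
  refine Real.tsum_le_of_sum_range_le (fun a => Set.indicator_nonneg (fun _ _ => by positivity) a)
    fun n => ?_
  calc ∑ a ∈ range n, (Set.Ioi N).indicator (fun a : ℕ => ((a : ℝ) ^ ((m : ℤ) + 2))⁻¹) a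
      ≤ ∑ a ∈ range n, ((N : ℝ) ^ m)⁻¹ * (Set.Ioi N).indicator (fun a : ℕ => ((a : ℝ) ^ 2)⁻¹) a :=
        sum_le_sum fun a _ => hterm a
    _ = ((N : ℝ) ^ m)⁻¹ * ∑ a ∈ Ioo N n, ((a : ℝ) ^ 2)⁻¹ := by
        rw [← mul_sum, sum_indicator_eq_sum_filter]
        congr 2
        ext a
        simp only [mem_filter, mem_range, Set.mem_Ioi, mem_Ioo]
        tauto
    _ ≤ ((N : ℝ) ^ m)⁻¹ * (2 / (N + 1)) := by gcongr; exact sum_Ioo_inv_sq_le N n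
    _ ≤ 2 * ((N : ℝ) ^ ((m : ℤ) + 2 - 1))⁻¹ := by
        rw [show ((m : ℤ) + 2 - 1) = ((m + 1 : ℕ) : ℤ) by push_cast; ring, zpow_natCast, pow_succ]
        field_simp
        linarith

def mzvIndices (k : ℕ) : Set (Fin k → ℕ) := {n | (∀ i, 0 < n i) ∧ StrictAnti n}

noncomputable def mzvTerm {k : ℕ} (s : Fin k → ℤ) (n : Fin k → ℕ) : ℝ := ∏ i, ((n i : ℝ) ^ s i)⁻¹

def mzvShift {k : ℕ} (s : Fin (k + 2) → ℤ) : Fin (k + 1) → ℤ := Fin.tail s + Pi.single 0 (s 0 - 1)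

section
variable {k : ℕ}

theorem cons_mem_mzvIndices {t : Fin (k + 1) → ℕ} {a : ℕ} :
    Fin.cons a t ∈ mzvIndices (k + 2) ↔ t ∈ mzvIndices (k + 1) ∧ t 0 < a := by
  show ((∀ i, 0 < (Fin.cons a t : Fin (k + 2) → ℕ) i) ∧ StrictAnti (Matrix.vecCons a t)) ↔ _
  rw [Fin.forall_fin_succ, strictAnti_vecCons]
  simp only [Fin.cons_zero, Fin.cons_succ]
  constructor
  · rintro ⟨⟨-, hpos⟩, hlt, hanti⟩
    exact ⟨⟨hpos, hanti⟩, hlt⟩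
  · rintro ⟨⟨hpos, hanti⟩, hlt⟩
    exact ⟨⟨(hpos 0).trans hlt, hpos⟩, hlt, hanti⟩

theorem mzvTerm_nonneg (s : Fin k → ℤ) (n : Fin k → ℕ) : 0 ≤ mzvTerm s n :=
  prod_nonneg fun _ _ => by positivity

theorem indicator_mzvTerm_nonneg (s : Fin k → ℤ) (n : Fin k → ℕ) :
    0 ≤ (mzvIndices k).indicator (mzvTerm s) n :=
  Set.indicator_nonneg (fun n _ => mzvTerm_nonneg s n) n

theorem mzvTerm_cons (s : Fin (k + 1) → ℤ) (a : ℕ) (t : Fin k → ℕ) :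
    mzvTerm s (Fin.cons a t) = ((a : ℝ) ^ s 0)⁻¹ * mzvTerm (Fin.tail s) t := by
  simp only [mzvTerm, Fin.prod_univ_succ, Fin.cons_zero, Fin.cons_succ, Fin.tail]

theorem mzvTerm_add (s s' : Fin k → ℤ) {n : Fin k → ℕ} (hn : ∀ i, 0 < n i) :
    mzvTerm (s + s') n = mzvTerm s n * mzvTerm s' n := by
  simp only [mzvTerm, ← prod_mul_distrib, Pi.add_apply, ← mul_inv]
  refine prod_congr rfl fun i _ => ?_
  rw [zpow_add₀ (by exact_mod_cast (hn i).ne')]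

theorem mzvTerm_single (i : Fin k) (c : ℤ) (n : Fin k → ℕ) :
    mzvTerm (Pi.single i c) n = ((n i : ℝ) ^ c)⁻¹ := by
  rw [mzvTerm, prod_eq_single i (fun j _ hj => by simp [hj]) (by simp)]
  simp

theorem mzvTerm_mzvShift (s : Fin (k + 2) → ℤ) {t : Fin (k + 1) → ℕ} (ht : ∀ i, 0 < t i) :
    mzvTerm (mzvShift s) t = ((t 0 : ℝ) ^ (s 0 - 1))⁻¹ * mzvTerm (Fin.tail s) t := by
  rw [mzvShift, mzvTerm_add _ _ ht, mzvTerm_single, mul_comm]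

theorem sum_Iic_mzvShift (s : Fin (k + 2) → ℤ) (j : Fin (k + 1)) :
    ∑ i ∈ Iic j, mzvShift s i = ∑ i ∈ Iic j.succ, s i - 1 := by
  rw [Fin.sum_Iic_succ, mzvShift]
  simp only [Pi.add_apply]
  rw [sum_add_distrib, sum_pi_single', if_pos (mem_Iic.2 (Fin.zero_le j))]
  simp only [Fin.tail]
  ring

theorem summable_indicator_mzvTerm_cons {s : Fin (k + 1) → ℤ} (hs : 2 ≤ s 0)
    (t : Fin k → ℕ) :
    Summable fun a : ℕ => (mzvIndices (k + 1)).indicator (mzvTerm s) (Fin.cons a t) := by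
  have hzeta : Summable fun a : ℕ => ((a : ℝ) ^ s 0)⁻¹ := by
    lift s 0 to ℕ using (by omega) with m hm
    simp only [zpow_natCast]
    exact Real.summable_nat_pow_inv.2 (by omega)
  refine (hzeta.mul_left (mzvTerm (Fin.tail s) t)).of_nonneg_of_le
    (fun a => indicator_mzvTerm_nonneg s _) fun a => ?_
  rw [mul_comm, ← mzvTerm_cons]
  exact Set.indicator_le_self' (fun n _ => mzvTerm_nonneg s n) _

theorem indicator_mzvTerm_cons {s : Fin (k + 2) → ℤ} {t : Fin (k + 1) → ℕ}
    (ht : t ∈ mzvIndices (k + 1)) (a : ℕ) :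
    (mzvIndices (k + 2)).indicator (mzvTerm s) (Fin.cons a t)
      = mzvTerm (Fin.tail s) t * (Set.Ioi (t 0)).indicator (fun a : ℕ => ((a : ℝ) ^ s 0)⁻¹) a := by
  by_cases ha : t 0 < a
  · rw [Set.indicator_of_mem (cons_mem_mzvIndices.2 ⟨ht, ha⟩),
      Set.indicator_of_mem (Set.mem_Ioi.2 ha), mzvTerm_cons, mul_comm]
  · rw [Set.indicator_of_notMem (fun h => ha (cons_mem_mzvIndices.1 h).2),
      Set.indicator_of_notMem (mt Set.mem_Ioi.1 ha), mul_zero]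

theorem tsum_indicator_mzvTerm_cons_le {s : Fin (k + 2) → ℤ} (hs : 2 ≤ s 0)
    (t : Fin (k + 1) → ℕ) :
    ∑' a : ℕ, (mzvIndices (k + 2)).indicator (mzvTerm s) (Fin.cons a t)
      ≤ 2 * (mzvIndices (k + 1)).indicator (mzvTerm (mzvShift s)) t := by
  by_cases ht : t ∈ mzvIndices (k + 1)
  · rw [tsum_congr (indicator_mzvTerm_cons ht), tsum_mul_left, Set.indicator_of_mem ht,
      mzvTerm_mzvShift s ht.1]
    calc _ ≤ mzvTerm (Fin.tail s) t * (2 * ((t 0 : ℝ) ^ (s 0 - 1))⁻¹) :=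
          mul_le_mul_of_nonneg_left (tsum_indicator_Ioi_zpow_inv_le hs (ht.1 0))
            (mzvTerm_nonneg _ _)
      _ = _ := by ring
  · have hfiber (a : ℕ) : (mzvIndices (k + 2)).indicator (mzvTerm s) (Fin.cons a t) = 0 :=
      Set.indicator_of_notMem (fun h => ht (cons_mem_mzvIndices.1 h).1) _
    simp [hfiber, Set.indicator_of_notMem ht]

end

theorem summable_indicator_mzvTerm {k : ℕ} (s : Fin k → ℤ)
    (h : ∀ j : Fin k, ((j : ℕ) : ℤ) + 1 < ∑ i ∈ Iic j, s i) :
    Summable ((mzvIndices k).indicator (mzvTerm s)) := by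
  induction k with
  | zero => exact Summable.of_finite
  | succ k ih =>
    have hs : 2 ≤ s 0 := by
      have h0 := h 0
      rw [← _root_.bot_eq_zero, Iic_bot, sum_singleton, _root_.bot_eq_zero] at h0
      simp only [Fin.val_zero, Nat.cast_zero, zero_add] at h0
      omega
    rw [← ((Equiv.prodComm _ _).trans (Fin.consEquiv fun _ => ℕ)).summable_iff]
    refine (summable_prod_of_nonneg fun _ => indicator_mzvTerm_nonneg s _).2
      ⟨summable_indicator_mzvTerm_cons hs, ?_⟩
    cases k with
    | zero => exact Summable.of_finite
    | succ k =>
      have hshift : ∀ j : Fin (k + 1), ((j : ℕ) : ℤ) + 1 < ∑ i ∈ Iic j, mzvShift s i := by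
        intro j
        have := h j.succ
        rw [sum_Iic_mzvShift]
        push_cast [Fin.val_succ] at this
        omega
      exact ((ih (mzvShift s) hshift).mul_left 2).of_nonneg_of_le
        (fun t => tsum_nonneg fun a => indicator_mzvTerm_nonneg s _)
        (tsum_indicator_mzvTerm_cons_le hs)

/-- The multiple zeta series `ζ(s₁,…,s_k) = Σ_{n₁>⋯>n_k>0} 1/(n₁^{s₁}⋯n_k^{s_k})` with integer
arguments converges whenever `s₁+⋯+s_j > j` for all `j = 1,…,k`. -/
theorem mzv_convergent (k : ℕ) (s : Fin k → ℤ)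
    (h : ∀ j : Fin k, ((j : ℕ) : ℤ) + 1 < ∑ i ∈ Finset.Iic j, s i) :
    Summable (fun n : {n : Fin k → ℕ // (∀ i, 0 < n i) ∧ ∀ i j : Fin k, i < j → n j < n i} =>
      ∏ i, ((n.1 i : ℝ) ^ (s i))⁻¹) :=
  summable_subtype_iff_indicator.2 (summable_indicator_mzvTerm s h)
end

section
/- There exists a unique associative product ⧢ on the vector space ℋ_ℤ = ℚ1 ⊕ ⊕_{k≥1, s⃗∈ℤ^k} ℚ[s⃗], graded by depth, with unit 1, such that: (1) [0]⧢[s⃗] = [0,s⃗] for all s⃗; (2) [s⃗]⧢[0] = [0,s⃗] whenever the first entry of s⃗ is positive; (3) the shift operator J defined by J([s₁,s₂,…,s_k]) = [s₁−1,s₂,…,s_k] and J(1) = 0 is a derivation for ⧢. -/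
noncomputable section

/-- The vector space ℋ_ℤ with basis the symbols `[s₁,…,s_k]` (lists of integers),
the empty list being the unit `1`. -/
abbrev HZ : Type := List ℤ →₀ ℚ

/-- The basis symbol `[s₁,…,s_k]`. -/
def bs (l : List ℤ) : HZ := Finsupp.single l 1

/-- Linear extension of a map defined on basis symbols. -/
def hlift (f : List ℤ → HZ) : HZ →ₗ[ℚ] HZ := Finsupp.lift HZ ℚ (List ℤ) f

/-- Prepending a `0` entry to every basis symbol. -/
def preZ : HZ →ₗ[ℚ] HZ := hlift fun l => bs (0 :: l)

/-- The operator `I` adding 1 to the first entry. -/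
def Imap : HZ →ₗ[ℚ] HZ := hlift fun l =>
  match l with
  | [] => 0
  | s :: r => bs ((s + 1) :: r)

/-- The operator `J` subtracting 1 from the first entry, with `J(1) = 0`. -/
def Jmap : HZ →ₗ[ℚ] HZ := hlift fun l =>
  match l with
  | [] => 0
  | s :: r => bs ((s - 1) :: r)

/-- The five-case recursion defining the extended shuffle product on ℋ_ℤ. -/
def IsExtShuffle (m : HZ →ₗ[ℚ] HZ →ₗ[ℚ] HZ) : Prop :=
  (∀ x, m (bs []) x = x) ∧
  (∀ x, m x (bs []) = x) ∧
  (∀ (s' : List ℤ) (t₁ : ℤ) (t' : List ℤ),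
    m (bs (0 :: s')) (bs (t₁ :: t')) = preZ (m (bs s') (bs (t₁ :: t')))) ∧
  (∀ (s₁ : ℤ), 0 < s₁ → ∀ (s' t' : List ℤ),
    m (bs (s₁ :: s')) (bs (0 :: t')) = preZ (m (bs (s₁ :: s')) (bs t'))) ∧
  (∀ (s₁ t₁ : ℤ), 0 < s₁ → 0 < t₁ → ∀ (s' t' : List ℤ),
    m (bs (s₁ :: s')) (bs (t₁ :: t')) =
      Imap (m (bs (s₁ :: s')) (bs ((t₁ - 1) :: t'))) +
      Imap (m (bs ((s₁ - 1) :: s')) (bs (t₁ :: t')))) ∧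
  (∀ (s₁ t₁ : ℤ), 0 < s₁ → t₁ < 0 → ∀ (s' t' : List ℤ),
    m (bs (s₁ :: s')) (bs (t₁ :: t')) =
      Jmap (m (bs (s₁ :: s')) (bs ((t₁ + 1) :: t'))) -
      m (bs ((s₁ - 1) :: s')) (bs ((t₁ + 1) :: t'))) ∧
  (∀ (s₁ : ℤ), s₁ < 0 → ∀ (t₁ : ℤ) (s' t' : List ℤ),
    m (bs (s₁ :: s')) (bs (t₁ :: t')) =
      Jmap (m (bs ((s₁ + 1) :: s')) (bs (t₁ :: t'))) -
      m (bs ((s₁ + 1) :: s')) (bs ((t₁ - 1) :: t')))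

lemma hlift_single (f : List ℤ → HZ) (l : List ℤ) : hlift f (bs l) = f l := by
  simp [hlift, bs, Finsupp.lift_apply, Finsupp.sum_single_index]

lemma preZ_bs (l : List ℤ) : preZ (bs l) = bs (0 :: l) := hlift_single _ _
lemma Imap_bs (a : ℤ) (r : List ℤ) : Imap (bs (a :: r)) = bs ((a+1) :: r) := hlift_single _ _
lemma Jmap_bs (a : ℤ) (r : List ℤ) : Jmap (bs (a :: r)) = bs ((a-1) :: r) := hlift_single _ _
lemma Jmap_nil : Jmap (bs []) = 0 := hlift_single _ _
lemma Imap_nil : Imap (bs []) = 0 := hlift_single _ _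

def hw (a : ℤ) : ℕ := if 0 ≤ a then a.toNat else 3 * a.natAbs

lemma hw_spec (a : ℤ) : (0 ≤ a ∧ (hw a : ℤ) = a) ∨ (a < 0 ∧ (hw a : ℤ) = -3 * a) := by
  unfold hw; split_ifs with h <;> omega

def mu : List ℤ → List ℤ → HZ
  | [], t => bs t
  | a :: s', [] => bs (a :: s')
  | a :: s', b :: t' =>
    if a = 0 then preZ (mu s' (b :: t'))
    else if 0 < a then
      if b = 0 then preZ (mu (a :: s') t')
      else if 0 < b then
        Imap (mu (a :: s') ((b-1) :: t')) + Imap (mu ((a-1) :: s') (b :: t'))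
      else Jmap (mu (a :: s') ((b+1) :: t')) - mu ((a-1) :: s') ((b+1) :: t')
    else Jmap (mu ((a+1) :: s') (b :: t')) - mu ((a+1) :: s') ((b-1) :: t')
termination_by s t => (s.length + t.length, hw s.headI + t.headI.natAbs)
decreasing_by
  all_goals simp_all [Prod.lex_iff]
  all_goals (have := hw_spec a; have := hw_spec (a+1); have := hw_spec (a-1); omega)

lemma mu_nil (t : List ℤ) : mu [] t = bs t := by rw [mu]
lemma mu_nil' (s : List ℤ) : mu s [] = bs s := by cases s <;> rw [mu]
lemma mu_zero (s' : List ℤ) (b : ℤ) (t' : List ℤ) :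
    mu (0 :: s') (b :: t') = preZ (mu s' (b :: t')) := by rw [mu]; simp
lemma mu_pz (a : ℤ) (ha : 0 < a) (s' t' : List ℤ) :
    mu (a :: s') (0 :: t') = preZ (mu (a :: s') t') := by
  rw [mu]; simp [ha.ne', ha]
lemma mu_pp (a b : ℤ) (ha : 0 < a) (hb : 0 < b) (s' t' : List ℤ) :
    mu (a :: s') (b :: t') =
      Imap (mu (a :: s') ((b-1) :: t')) + Imap (mu ((a-1) :: s') (b :: t')) := by
  rw [mu]; simp [ha.ne', ha, hb.ne', hb]
lemma mu_pn (a b : ℤ) (ha : 0 < a) (hb : b < 0) (s' t' : List ℤ) :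
    mu (a :: s') (b :: t') =
      Jmap (mu (a :: s') ((b+1) :: t')) - mu ((a-1) :: s') ((b+1) :: t') := by
  rw [mu]; simp [ha.ne', ha, hb.ne, not_lt.2 hb.le]
lemma mu_neg (a : ℤ) (ha : a < 0) (b : ℤ) (s' t' : List ℤ) :
    mu (a :: s') (b :: t') =
      Jmap (mu ((a+1) :: s') (b :: t')) - mu ((a+1) :: s') ((b-1) :: t') := by
  rw [mu]; simp [ha.ne, not_lt.2 ha.le]

def M : HZ →ₗ[ℚ] HZ →ₗ[ℚ] HZ :=
  Finsupp.lift (HZ →ₗ[ℚ] HZ) ℚ (List ℤ) (fun s => hlift (mu s))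

lemma M_bs (s t : List ℤ) : M (bs s) (bs t) = mu s t := by
  have : M (bs s) = hlift (mu s) := by
    simp [M, bs, Finsupp.lift_apply, Finsupp.sum_single_index]
  rw [this, hlift_single]


lemma bs_smul (l : List ℤ) (q : ℚ) : (Finsupp.single l q : HZ) = q • bs l := by
  simp [bs, Finsupp.smul_single]

lemma hz_ext {F G : HZ →ₗ[ℚ] HZ} (h : ∀ l, F (bs l) = G (bs l)) : F = G := by
  apply Finsupp.lhom_ext; intro l q
  rw [bs_smul, map_smul, map_smul, h]

lemma hz_ext' {F G : HZ →ₗ[ℚ] HZ} (h : ∀ l, F (bs l) = G (bs l)) (x : HZ) : F x = G x := by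
  rw [hz_ext h]

lemma M_one_left (x : HZ) : M (bs []) x = x :=
  hz_ext' (F := M (bs [])) (G := LinearMap.id) (fun l => by simp [M_bs, mu_nil]) x

lemma M_one_right (x : HZ) : M x (bs []) = x :=
  hz_ext' (F := (LinearMap.flip M) (bs [])) (G := LinearMap.id)
    (fun l => by simp [LinearMap.flip_apply, M_bs, mu_nil']) x

-- preZ rules
lemma M_preZ_left (y x : HZ) : M (preZ y) x = preZ (M y x) := by
  have h1 : ∀ l, M (preZ (bs l)) x = preZ (M (bs l) x) := by
    intro l
    refine hz_ext' (F := M (preZ (bs l))) (G := preZ ∘ₗ M (bs l)) (fun t => ?_) x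
    rw [preZ_bs]
    cases t with
    | nil => simp [LinearMap.comp_apply, M_bs, mu_nil', preZ_bs]
    | cons b t' => simp [LinearMap.comp_apply, M_bs, mu_zero]
  exact hz_ext' (F := (LinearMap.flip M x) ∘ₗ preZ) (G := preZ ∘ₗ (LinearMap.flip M x))
    (fun l => by simpa [LinearMap.comp_apply, LinearMap.flip_apply] using h1 l) y

lemma bs_mem {S : Set (List ℤ)} {l : List ℤ} (h : l ∈ S) :
    bs l ∈ Finsupp.supported ℚ ℚ S := Finsupp.single_mem_supported ℚ 1 h

lemma map_mem_supported {S : Set (List ℤ)} {T : Submodule ℚ HZ} (F : HZ →ₗ[ℚ] HZ)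
    (h : ∀ l ∈ S, F (bs l) ∈ T) {x : HZ} (hx : x ∈ Finsupp.supported ℚ ℚ S) : F x ∈ T := by
  rw [Finsupp.supported_eq_span_single] at hx
  induction hx using Submodule.span_induction with
  | mem y hy => obtain ⟨l, hl, rfl⟩ := hy; exact h l hl
  | zero => simp
  | add a b _ _ ha hb => rw [map_add]; exact T.add_mem ha hb
  | smul q a _ ha => rw [map_smul]; exact T.smul_mem q ha

lemma map_eq_supported {S : Set (List ℤ)} (F G : HZ →ₗ[ℚ] HZ)
    (h : ∀ l ∈ S, F (bs l) = G (bs l)) {x : HZ} (hx : x ∈ Finsupp.supported ℚ ℚ S) :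
    F x = G x := by
  rw [Finsupp.supported_eq_span_single] at hx
  induction hx using Submodule.span_induction with
  | mem y hy => obtain ⟨l, hl, rfl⟩ := hy; exact h l hl
  | zero => simp
  | add a b _ _ ha hb => rw [map_add, map_add, ha, hb]
  | smul q a _ ha => rw [map_smul, map_smul, ha]

lemma preZ_mem {n : ℕ} {x : HZ} (hx : x ∈ Finsupp.supported ℚ ℚ {l : List ℤ | l.length = n}) :
    preZ x ∈ Finsupp.supported ℚ ℚ {l : List ℤ | l.length = n + 1} := by
  refine map_mem_supported preZ (fun l hl => ?_) hx
  rw [preZ_bs]; exact bs_mem (by simpa using hl)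

lemma Imap_mem {n : ℕ} {x : HZ} (hx : x ∈ Finsupp.supported ℚ ℚ {l : List ℤ | l.length = n}) :
    Imap x ∈ Finsupp.supported ℚ ℚ {l : List ℤ | l.length = n} := by
  refine map_mem_supported Imap (fun l hl => ?_) hx
  cases l with
  | nil => rw [Imap_nil]; simp
  | cons a r => rw [Imap_bs]; exact bs_mem (by simpa using hl)

lemma Jmap_mem {n : ℕ} {x : HZ} (hx : x ∈ Finsupp.supported ℚ ℚ {l : List ℤ | l.length = n}) :
    Jmap x ∈ Finsupp.supported ℚ ℚ {l : List ℤ | l.length = n} := by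
  refine map_mem_supported Jmap (fun l hl => ?_) hx
  cases l with
  | nil => rw [Jmap_nil]; simp
  | cons a r => rw [Jmap_bs]; exact bs_mem (by simpa using hl)

lemma mu_len (s t : List ℤ) :
    mu s t ∈ Finsupp.supported ℚ ℚ {l : List ℤ | l.length = s.length + t.length} := by
  induction s, t using mu.induct with
  | case1 t => rw [mu_nil]; exact bs_mem (by simp)
  | case2 a s' => rw [mu_nil']; exact bs_mem (by simp)
  | case3 s' b t' ih =>
      rw [mu_zero]
      simpa [Nat.add_comm, Nat.add_left_comm] using preZ_mem ih
  | case4 a s' t' ha hpos ih =>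
      rw [mu_pz a hpos]
      simpa [Nat.add_comm, Nat.add_left_comm] using preZ_mem ih
  | case5 a s' b t' ha hpos hb hbpos ih1 ih2 =>
      rw [mu_pp a b hpos hbpos]
      exact Submodule.add_mem _ (Imap_mem (by simpa using ih1)) (Imap_mem (by simpa using ih2))
  | case6 a s' b t' ha hpos hb hbneg ih1 ih2 =>
      rw [mu_pn a b hpos (by omega)]
      exact Submodule.sub_mem _ (Jmap_mem (by simpa using ih1)) (by simpa using ih2)
  | case7 a s' b t' ha hneg ih1 ih2 =>
      rw [mu_neg a (by omega)]
      exact Submodule.sub_mem _ (Jmap_mem (by simpa using ih1)) (by simpa using ih2)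

lemma JI {x : HZ} (hx : x ∈ Finsupp.supported ℚ ℚ {l : List ℤ | l ≠ []}) :
    Jmap (Imap x) = x := by
  refine map_eq_supported (Jmap ∘ₗ Imap) LinearMap.id (fun l hl => ?_) hx
  cases l with
  | nil => exact absurd rfl hl
  | cons a r => simp [LinearMap.comp_apply, Imap_bs, Jmap_bs]

lemma IJ {x : HZ} (hx : x ∈ Finsupp.supported ℚ ℚ {l : List ℤ | l ≠ []}) :
    Imap (Jmap x) = x := by
  refine map_eq_supported (Imap ∘ₗ Jmap) LinearMap.id (fun l hl => ?_) hx
  cases l with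
  | nil => exact absurd rfl hl
  | cons a r => simp [LinearMap.comp_apply, Imap_bs, Jmap_bs]

lemma len_sub_ne {n : ℕ} (hn : n ≠ 0) :
    ({l : List ℤ | l.length = n} : Set (List ℤ)) ⊆ {l : List ℤ | l ≠ []} := by
  intro l hl; simp only [Set.mem_setOf_eq] at *; intro h; subst h; simp at hl; omega

lemma mu_ne_nil (s t : List ℤ) (h : s.length + t.length ≠ 0) :
    mu s t ∈ Finsupp.supported ℚ ℚ {l : List ℤ | l ≠ []} :=
  Finsupp.supported_mono (len_sub_ne h) (mu_len s t)

lemma Jder_bs (s t : List ℤ) :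
    Jmap (mu s t) = M (Jmap (bs s)) (bs t) + M (bs s) (Jmap (bs t)) := by
  cases s with
  | nil => rw [mu_nil, Jmap_nil, map_zero, LinearMap.zero_apply, zero_add, M_one_left]
  | cons a s' =>
    cases t with
    | nil => rw [mu_nil', Jmap_nil, map_zero, add_zero, Jmap_bs, M_bs, mu_nil']
    | cons b t' =>
      rw [Jmap_bs, Jmap_bs, M_bs, M_bs]
      rcases lt_trichotomy a 0 with ha | ha | ha
      · -- a < 0 : expand mu ((a-1)::s') via mu_neg
        rw [mu_neg (a-1) (by omega) b s' t']
        have e : a - 1 + 1 = a := by ring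
        rw [e, sub_add_cancel]
      · -- a = 0
        subst ha
        have e : (0:ℤ) - 1 = -1 := by norm_num
        rw [e, mu_neg (-1) (by norm_num) b s' t']
        have e2 : (-1:ℤ) + 1 = 0 := by norm_num
        rw [e2, sub_add_cancel]
      · -- a > 0
        rcases lt_trichotomy b 0 with hb | hb | hb
        · -- b < 0: expand mu (a::s') ((b-1)::t')
          rw [mu_pn a (b-1) ha (by omega) s' t']
          have e : b - 1 + 1 = b := by ring
          rw [e, add_sub_cancel]
        · subst hb
          have e : (0:ℤ) - 1 = -1 := by norm_num
          rw [e, mu_pn a (-1) ha (by norm_num) s' t']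
          have e2 : (-1:ℤ) + 1 = 0 := by norm_num
          rw [e2, add_sub_cancel]
        · -- a > 0, b > 0
          rw [mu_pp a b ha hb, map_add,
            JI (mu_ne_nil _ _ (by simp)), JI (mu_ne_nil _ _ (by simp)), add_comm]

lemma Jder (x y : HZ) : Jmap (M x y) = M (Jmap x) y + M x (Jmap y) := by
  have h : LinearMap.compr₂ M Jmap = M ∘ₗ Jmap + LinearMap.compl₂ M Jmap := by
    apply Finsupp.lhom_ext
    intro s q
    rw [bs_smul, map_smul, map_smul]
    congr 1
    apply hz_ext
    intro t
    simp only [LinearMap.compr₂_apply, LinearMap.comp_apply, LinearMap.add_apply,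
      LinearMap.compl₂_apply, M_bs]
    exact Jder_bs s t
  have := LinearMap.congr_fun (LinearMap.congr_fun h x) y
  simpa using this

def Snn : Set (List ℤ) := {l | ∃ h r, l = h :: r ∧ 0 ≤ h}
def Spos : Set (List ℤ) := {l | ∃ h r, l = h :: r ∧ 0 < h}

lemma mem_supported_univ (x : HZ) : x ∈ Finsupp.supported ℚ ℚ (Set.univ : Set (List ℤ)) := by
  rw [Finsupp.supported_univ]; trivial

lemma preZ_mem_nn (x : HZ) : preZ x ∈ Finsupp.supported ℚ ℚ Snn := by
  refine map_mem_supported preZ (fun l _ => ?_) (mem_supported_univ x)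
  rw [preZ_bs]; exact bs_mem ⟨0, l, rfl, le_refl 0⟩

lemma Imap_nn_nn {x : HZ} (hx : x ∈ Finsupp.supported ℚ ℚ Snn) :
    Imap x ∈ Finsupp.supported ℚ ℚ Snn := by
  refine map_mem_supported Imap (fun l hl => ?_) hx
  obtain ⟨h, r, rfl, hh⟩ := hl
  rw [Imap_bs]; exact bs_mem ⟨h+1, r, rfl, by omega⟩

lemma Imap_nn_pos {x : HZ} (hx : x ∈ Finsupp.supported ℚ ℚ Snn) :
    Imap x ∈ Finsupp.supported ℚ ℚ Spos := by
  refine map_mem_supported Imap (fun l hl => ?_) hx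
  obtain ⟨h, r, rfl, hh⟩ := hl
  rw [Imap_bs]; exact bs_mem ⟨h+1, r, rfl, by omega⟩

lemma mu_nn : ∀ (k : ℕ) (a b : ℤ), a.toNat + b.toNat ≤ k → 0 ≤ a → 0 ≤ b →
    ∀ s' t' : List ℤ, mu (a :: s') (b :: t') ∈ Finsupp.supported ℚ ℚ Snn := by
  intro k
  induction k using Nat.strong_induction_on with
  | _ k IH =>
    intro a b hk ha hb s' t'
    rcases eq_or_lt_of_le ha with ha0 | hapos
    · rw [← ha0, mu_zero]; exact preZ_mem_nn _
    · rcases eq_or_lt_of_le hb with hb0 | hbpos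
      · rw [← hb0, mu_pz a hapos]; exact preZ_mem_nn _
      · rw [mu_pp a b hapos hbpos]
        refine Submodule.add_mem _ (Imap_nn_nn ?_) (Imap_nn_nn ?_)
        · exact IH (k-1) (by omega) a (b-1) (by omega) (by omega) (by omega) s' t'
        · exact IH (k-1) (by omega) (a-1) b (by omega) (by omega) (by omega) s' t'

lemma mu_pos {a b : ℤ} (ha : 0 < a) (hb : 0 < b) (s' t' : List ℤ) :
    mu (a :: s') (b :: t') ∈ Finsupp.supported ℚ ℚ Spos := by
  rw [mu_pp a b ha hb]
  refine Submodule.add_mem _ (Imap_nn_pos ?_) (Imap_nn_pos ?_)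
  · exact mu_nn (a.toNat + (b-1).toNat) a (b-1) le_rfl (by omega) (by omega) s' t'
  · exact mu_nn ((a-1).toNat + b.toNat) (a-1) b le_rfl (by omega) (by omega) s' t'

-- R2 : right multiplication by preZ for positive-head basis on the left
lemma M_preZ_right_bs {a : ℤ} (ha : 0 < a) (s' : List ℤ) (y : HZ) :
    M (bs (a :: s')) (preZ y) = preZ (M (bs (a :: s')) y) := by
  refine hz_ext' (F := (M (bs (a :: s'))) ∘ₗ preZ) (G := preZ ∘ₗ M (bs (a :: s'))) (fun l => ?_) y
  simp only [LinearMap.comp_apply, preZ_bs, M_bs]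
  exact mu_pz a ha s' l

-- R3 : right multiplication by [0::u'] on positive-head-supported elements
lemma M_zero_right_pos {x : HZ} (hx : x ∈ Finsupp.supported ℚ ℚ Spos) (u' : List ℤ) :
    M x (bs (0 :: u')) = preZ (M x (bs u')) := by
  refine map_eq_supported (M.flip (bs (0 :: u'))) (preZ ∘ₗ M.flip (bs u')) (fun l hl => ?_) hx
  obtain ⟨h, r, rfl, hh⟩ := hl
  simp only [LinearMap.comp_apply, LinearMap.flip_apply, M_bs]
  exact mu_pz h hh r u'

-- R4 : right multiplication by negative head on positive-head-supported elements
lemma M_neg_right_pos {x : HZ} (hx : x ∈ Finsupp.supported ℚ ℚ Spos) {c : ℤ} (hc : c < 0)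
    (u' : List ℤ) :
    M x (bs (c :: u')) =
      Jmap (M x (bs ((c+1) :: u'))) - M (Jmap x) (bs ((c+1) :: u')) := by
  refine map_eq_supported (M.flip (bs (c :: u')))
    (Jmap ∘ₗ M.flip (bs ((c+1) :: u')) - (M.flip (bs ((c+1) :: u'))) ∘ₗ Jmap)
    (fun l hl => ?_) hx
  obtain ⟨h, r, rfl, hh⟩ := hl
  simp only [LinearMap.comp_apply, LinearMap.sub_apply, LinearMap.flip_apply, M_bs, Jmap_bs]
  exact mu_pn h c hh hc r u'

-- R5 : left multiplication by negative head, any right element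
lemma M_neg_left {a : ℤ} (ha : a < 0) (s' : List ℤ) (x : HZ) :
    M (bs (a :: s')) x =
      Jmap (M (bs ((a+1) :: s')) x) - M (bs ((a+1) :: s')) (Jmap x) := by
  refine hz_ext' (F := M (bs (a :: s')))
    (G := Jmap ∘ₗ M (bs ((a+1) :: s')) - (M (bs ((a+1) :: s'))) ∘ₗ Jmap) (fun t => ?_) x
  cases t with
  | nil =>
      simp only [LinearMap.comp_apply, LinearMap.sub_apply, M_bs, mu_nil', Jmap_nil,
        map_zero, Jmap_bs, sub_zero]
      norm_num
  | cons b t' =>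
      simp only [LinearMap.comp_apply, LinearMap.sub_apply, M_bs, Jmap_bs]
      exact mu_neg a ha b s' t'

lemma Jder' (x y : HZ) : M (Jmap x) y = Jmap (M x y) - M x (Jmap y) := by
  rw [Jder]; abel

lemma M_mem_len {m n : ℕ} {x y : HZ}
    (hx : x ∈ Finsupp.supported ℚ ℚ {l : List ℤ | l.length = m})
    (hy : y ∈ Finsupp.supported ℚ ℚ {l : List ℤ | l.length = n}) :
    M x y ∈ Finsupp.supported ℚ ℚ {l : List ℤ | l.length = m + n} := by
  refine map_mem_supported (M.flip y) (fun l hl => ?_) hx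
  simp only [LinearMap.flip_apply]
  refine map_mem_supported (M (bs l)) (fun t ht => ?_) hy
  rw [M_bs]
  have := mu_len l t
  simp only [Set.mem_setOf_eq] at hl ht
  rw [hl, ht] at this
  exact this

lemma Jder'' (x y : HZ) : M x (Jmap y) = Jmap (M x y) - M (Jmap x) y := by
  rw [Jder]; abel

def mu3 (s t u : List ℤ) : ℕ := 4 * s.headI.natAbs + 2 * t.headI.natAbs + u.headI.natAbs

lemma assoc_aux : ∀ (N K : ℕ) (s t u : List ℤ), s.length + t.length + u.length ≤ N →
    mu3 s t u ≤ K → M (M (bs s) (bs t)) (bs u) = M (bs s) (M (bs t) (bs u)) := by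
  intro N
  induction N using Nat.strong_induction_on with
  | _ N IHN =>
  intro K
  induction K using Nat.strong_induction_on with
  | _ K IHK =>
  intro s t u hN hK
  cases s with
  | nil => rw [M_one_left, M_one_left]
  | cons a s' =>
  cases t with
  | nil => rw [M_one_right, M_one_left]
  | cons b t' =>
  cases u with
  | nil => rw [M_one_right, M_one_right]
  | cons c u'' =>
  rcases lt_trichotomy a 0 with ha | ha | ha
  · -- a < 0
    have H1 := IHK (mu3 ((a+1)::s') (b::t') (c::u''))
      (by simp only [mu3, List.headI] at hK ⊢; omega) ((a+1)::s') (b::t') (c::u'')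
      (by simp only [List.length_cons] at hN ⊢; omega) le_rfl
    have H2 := IHK (mu3 ((a+1)::s') (b::t') ((c-1)::u''))
      (by simp only [mu3, List.headI] at hK ⊢; omega) ((a+1)::s') (b::t') ((c-1)::u'')
      (by simp only [List.length_cons] at hN ⊢; omega) le_rfl
    have H3 := IHK (mu3 ((a+1)::s') ((b-1)::t') (c::u''))
      (by simp only [mu3, List.headI] at hK ⊢; omega) ((a+1)::s') ((b-1)::t') (c::u'')
      (by simp only [List.length_cons] at hN ⊢; omega) le_rfl
    rw [M_neg_left ha s' (bs (b::t')), Jmap_bs, map_sub, LinearMap.sub_apply,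
      Jder' (M (bs ((a+1)::s')) (bs (b::t'))) (bs (c::u'')), Jmap_bs,
      M_neg_left ha s' (M (bs (b::t')) (bs (c::u''))),
      Jder (bs (b::t')) (bs (c::u'')), Jmap_bs, Jmap_bs, map_add,
      H1, H2, H3]
    abel
  · -- a = 0
    subst ha
    rw [show bs ((0:ℤ)::s') = preZ (bs s') from (preZ_bs s').symm]
    simp only [M_preZ_left]
    congr 1
    exact IHN (N-1) (by simp only [List.length_cons] at hN; omega)
      (mu3 s' (b::t') (c::u'')) s' (b::t') (c::u'')
      (by simp only [List.length_cons] at hN ⊢; omega) le_rfl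
  · -- a > 0
    rcases lt_trichotomy b 0 with hb | hb | hb
    · -- b < 0
      have H1 := IHK (mu3 ((a)::s') ((b+1)::t') (c::u''))
        (by simp only [mu3, List.headI] at hK ⊢; omega) (a::s') ((b+1)::t') (c::u'')
        (by simp only [List.length_cons] at hN ⊢; omega) le_rfl
      have H2 := IHK (mu3 ((a)::s') ((b+1)::t') ((c-1)::u''))
        (by simp only [mu3, List.headI] at hK ⊢; omega) (a::s') ((b+1)::t') ((c-1)::u'')
        (by simp only [List.length_cons] at hN ⊢; omega) le_rfl
      have H3 := IHK (mu3 ((a-1)::s') ((b+1)::t') (c::u''))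
        (by simp only [mu3, List.headI] at hK ⊢; omega) ((a-1)::s') ((b+1)::t') (c::u'')
        (by simp only [List.length_cons] at hN ⊢; omega) le_rfl
      rw [M_bs (a::s') (b::t'), mu_pn a b ha hb s' t',
        ← M_bs (a::s') ((b+1)::t'), ← M_bs ((a-1)::s') ((b+1)::t'),
        map_sub, LinearMap.sub_apply,
        Jder' (M (bs (a::s')) (bs ((b+1)::t'))) (bs (c::u'')), Jmap_bs,
        M_bs (b::t') (c::u''), mu_neg b hb c t' u'',
        ← M_bs ((b+1)::t') (c::u''), ← M_bs ((b+1)::t') ((c-1)::u''),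
        map_sub,
        Jder'' (bs (a::s')) (M (bs ((b+1)::t')) (bs (c::u''))), Jmap_bs,
        H1, H2, H3]
      abel
    · -- b = 0
      subst hb
      rw [show bs ((0:ℤ)::t') = preZ (bs t') from (preZ_bs t').symm]
      simp only [M_preZ_left, M_preZ_right_bs ha]
      congr 1
      exact IHN (N-1) (by simp only [List.length_cons] at hN; omega)
        (mu3 (a::s') t' (c::u'')) (a::s') t' (c::u'')
        (by simp only [List.length_cons] at hN ⊢; omega) le_rfl
    · -- b > 0
      have hsup : M (bs (a::s')) (bs (b::t')) ∈ Finsupp.supported ℚ ℚ Spos := by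
        rw [M_bs]; exact mu_pos ha hb s' t'
      rcases lt_trichotomy c 0 with hc | hc | hc
      · -- c < 0
        have H1 := IHK (mu3 ((a)::s') ((b)::t') ((c+1)::u''))
          (by simp only [mu3, List.headI] at hK ⊢; omega) (a::s') (b::t') ((c+1)::u'')
          (by simp only [List.length_cons] at hN ⊢; omega) le_rfl
        have H2 := IHK (mu3 ((a-1)::s') ((b)::t') ((c+1)::u''))
          (by simp only [mu3, List.headI] at hK ⊢; omega) ((a-1)::s') (b::t') ((c+1)::u'')
          (by simp only [List.length_cons] at hN ⊢; omega) le_rfl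
        have H3 := IHK (mu3 ((a)::s') ((b-1)::t') ((c+1)::u''))
          (by simp only [mu3, List.headI] at hK ⊢; omega) (a::s') ((b-1)::t') ((c+1)::u'')
          (by simp only [List.length_cons] at hN ⊢; omega) le_rfl
        rw [M_neg_right_pos hsup hc u'',
          Jder (bs (a::s')) (bs (b::t')), Jmap_bs, Jmap_bs, map_add, LinearMap.add_apply,
          M_bs (b::t') (c::u''), mu_pn b c hb hc t' u'',
          ← M_bs ((b)::t') ((c+1)::u''), ← M_bs ((b-1)::t') ((c+1)::u''),
          map_sub,
          Jder'' (bs (a::s')) (M (bs ((b)::t')) (bs ((c+1)::u''))), Jmap_bs,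
          H1, H2, H3]
        abel
      · -- c = 0
        subst hc
        rw [M_zero_right_pos hsup u'',
          M_bs (b::t') ((0:ℤ)::u''), mu_pz b hb t' u'', ← M_bs (b::t') u'',
          M_preZ_right_bs ha]
        congr 1
        exact IHN (N-1) (by simp only [List.length_cons] at hN; omega)
          (mu3 (a::s') (b::t') u'') (a::s') (b::t') u''
          (by simp only [List.length_cons] at hN ⊢; omega) le_rfl
      · -- c > 0
        have H1 := IHK (mu3 ((a-1)::s') ((b)::t') ((c)::u''))
          (by simp only [mu3, List.headI] at hK ⊢; omega) ((a-1)::s') (b::t') (c::u'')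
          (by simp only [List.length_cons] at hN ⊢; omega) le_rfl
        have H2 := IHK (mu3 ((a)::s') ((b-1)::t') ((c)::u''))
          (by simp only [mu3, List.headI] at hK ⊢; omega) (a::s') ((b-1)::t') (c::u'')
          (by simp only [List.length_cons] at hN ⊢; omega) le_rfl
        have H3 := IHK (mu3 ((a)::s') ((b)::t') ((c-1)::u''))
          (by simp only [mu3, List.headI] at hK ⊢; omega) (a::s') (b::t') ((c-1)::u'')
          (by simp only [List.length_cons] at hN ⊢; omega) le_rfl
        set E := M (M (bs (a::s')) (bs (b::t'))) (bs (c::u'')) -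
          M (bs (a::s')) (M (bs (b::t')) (bs (c::u''))) with hE
        have hJE : Jmap E = 0 := by
          rw [hE, map_sub, Jder (M (bs (a::s')) (bs (b::t'))) (bs (c::u'')),
            Jder (bs (a::s')) (bs (b::t')), Jmap_bs, Jmap_bs, Jmap_bs,
            map_add, LinearMap.add_apply,
            Jder (bs (a::s')) (M (bs (b::t')) (bs (c::u''))), Jmap_bs,
            Jder (bs (b::t')) (bs (c::u'')), Jmap_bs, Jmap_bs, map_add,
            H1, H2, H3]
          abel
        have hmem : E ∈ Finsupp.supported ℚ ℚ
            {l : List ℤ | l.length = (a::s').length + (b::t').length + (c::u'').length} := by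
          refine Submodule.sub_mem _ ?_ ?_
          · have h1 : M (bs (a::s')) (bs (b::t')) ∈ Finsupp.supported ℚ ℚ
                {l : List ℤ | l.length = (a::s').length + (b::t').length} := by
              rw [M_bs]; exact mu_len _ _
            exact M_mem_len h1 (bs_mem rfl)
          · have h2 : M (bs (b::t')) (bs (c::u'')) ∈ Finsupp.supported ℚ ℚ
                {l : List ℤ | l.length = (b::t').length + (c::u'').length} := by
              rw [M_bs]; exact mu_len _ _
            have := M_mem_len (bs_mem (rfl : (a::s') ∈ {l : List ℤ | l.length = (a::s').length})) h2
            simpa [Nat.add_assoc] using this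
        have hne : E ∈ Finsupp.supported ℚ ℚ {l : List ℤ | l ≠ []} :=
          Finsupp.supported_mono (len_sub_ne (by simp)) hmem
        have : E = 0 := by rw [← IJ hne, hJE, map_zero]
        exact sub_eq_zero.mp this

lemma M_assoc (x y z : HZ) : M (M x y) z = M x (M y z) := by
  refine hz_ext' (F := M (M x y)) (G := (M x) ∘ₗ (M y)) (fun u => ?_) z
  simp only [LinearMap.comp_apply]
  refine hz_ext' (F := (M.flip (bs u)) ∘ₗ (M x)) (G := (M x) ∘ₗ (M.flip (bs u)))
    (fun t => ?_) y
  simp only [LinearMap.comp_apply, LinearMap.flip_apply]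
  refine hz_ext' (F := (M.flip (bs u)) ∘ₗ (M.flip (bs t)))
    (G := M.flip (M (bs t) (bs u))) (fun s => ?_) x
  simp only [LinearMap.comp_apply, LinearMap.flip_apply]
  exact assoc_aux (s.length + t.length + u.length) (mu3 s t u) s t u le_rfl le_rfl

lemma hz_ext2 {F G : HZ →ₗ[ℚ] HZ →ₗ[ℚ] HZ}
    (h : ∀ s t, F (bs s) (bs t) = G (bs s) (bs t)) : F = G := by
  apply Finsupp.lhom_ext
  intro s q
  rw [bs_smul, map_smul, map_smul]
  congr 1
  exact hz_ext (h s)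

section Uniqueness

variable {m : HZ →ₗ[ℚ] HZ →ₗ[ℚ] HZ}
variable (h1 : ∀ x, m (bs []) x = x)
variable (h2 : ∀ x, m x (bs []) = x)
variable (h3 : ∀ a b c : HZ, m (m a b) c = m a (m b c))
variable (h4 : ∀ s t : List ℤ, ∀ l ∈ (m (bs s) (bs t)).support, l.length = s.length + t.length)
variable (h5 : ∀ s' t : List ℤ, m (bs (0 :: s')) (bs t) = preZ (m (bs s') (bs t)))
variable (h6 : ∀ s₁ : ℤ, 0 < s₁ → ∀ s' : List ℤ, m (bs (s₁ :: s')) (bs [0]) = bs (0 :: s₁ :: s'))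
variable (h7 : ∀ a b : HZ, Jmap (m a b) = m (Jmap a) b + m a (Jmap b))

include h1 h2 h3 h4 h5 h6 h7 in
lemma unique_aux : ∀ (N K : ℕ) (s t : List ℤ), s.length + t.length ≤ N →
    hw s.headI + t.headI.natAbs ≤ K → m (bs s) (bs t) = mu s t := by
  intro N
  induction N using Nat.strong_induction_on with
  | _ N IHN =>
  intro K
  induction K using Nat.strong_induction_on with
  | _ K IHK =>
  intro s t hN hK
  cases s with
  | nil => rw [h1, mu_nil]
  | cons a s' =>
  cases t with
  | nil => rw [h2, mu_nil']
  | cons b t' =>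
  rcases lt_trichotomy a 0 with ha | ha | ha
  · -- a < 0
    have key := h7 (bs ((a+1)::s')) (bs (b::t'))
    rw [Jmap_bs, Jmap_bs] at key
    have e : a + 1 - 1 = a := by ring
    rw [e] at key
    have H1 := IHK (hw ((a+1)::s').headI + ((b::t')).headI.natAbs)
      (by simp only [List.headI] at hK ⊢; have := hw_spec a; have := hw_spec (a+1); have := hw_spec (a-1); omega)
      ((a+1)::s') (b::t') (by simpa using hN) le_rfl
    have H2 := IHK (hw ((a+1)::s').headI + (((b-1)::t')).headI.natAbs)
      (by simp only [List.headI] at hK ⊢; have := hw_spec a; have := hw_spec (a+1); have := hw_spec (a-1); omega)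
      ((a+1)::s') ((b-1)::t') (by simpa using hN) le_rfl
    rw [H1, H2] at key
    rw [mu_neg a ha b s' t', eq_sub_iff_add_eq]
    exact key.symm
  · -- a = 0
    subst ha
    rw [h5, mu_zero]
    congr 1
    exact IHN (N-1) (by simp only [List.length_cons] at hN; omega)
      (hw (s').headI + ((b::t')).headI.natAbs) s' (b::t')
      (by simp only [List.length_cons] at hN ⊢; omega) le_rfl
  · -- a > 0
    rcases lt_trichotomy b 0 with hb | hb | hb
    · -- b < 0
      have key := h7 (bs ((a)::s')) (bs ((b+1)::t'))
      rw [Jmap_bs, Jmap_bs] at key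
      have e : b + 1 - 1 = b := by ring
      rw [e] at key
      have H1 := IHK (hw ((a)::s').headI + (((b+1)::t')).headI.natAbs)
        (by simp only [List.headI] at hK ⊢; have := hw_spec a; have := hw_spec (a+1); have := hw_spec (a-1); omega)
        ((a)::s') ((b+1)::t') (by simpa using hN) le_rfl
      have H2 := IHK (hw ((a-1)::s').headI + (((b+1)::t')).headI.natAbs)
        (by simp only [List.headI] at hK ⊢; have := hw_spec a; have := hw_spec (a+1); have := hw_spec (a-1); omega)
        ((a-1)::s') ((b+1)::t') (by simpa using hN) le_rfl
      rw [H1, H2] at key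
      rw [mu_pn a b ha hb s' t', eq_sub_iff_add_eq, add_comm]
      exact key.symm
    · -- b = 0
      subst hb
      have hz : m (bs [(0:ℤ)]) (bs t') = bs ((0:ℤ) :: t') := by
        rw [h5 [] t', h1, preZ_bs]
      have step : m (bs (a::s')) (bs ((0:ℤ)::t')) = preZ (m (bs (a::s')) (bs t')) := by
        rw [← hz, ← h3, h6 a ha s', h5 (a::s') t']
      rw [step, mu_pz a ha s' t']
      congr 1
      exact IHN (N-1) (by simp only [List.length_cons] at hN; omega)
        (hw ((a::s')).headI + (t').headI.natAbs) (a::s') t'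
        (by simp only [List.length_cons] at hN ⊢; omega) le_rfl
    · -- b > 0
      have key := h7 (bs ((a)::s')) (bs ((b)::t'))
      rw [Jmap_bs, Jmap_bs] at key
      have H1 := IHK (hw ((a-1)::s').headI + (((b)::t')).headI.natAbs)
        (by simp only [List.headI] at hK ⊢; have := hw_spec a; have := hw_spec (a+1); have := hw_spec (a-1); omega)
        ((a-1)::s') ((b)::t') (by simpa using hN) le_rfl
      have H2 := IHK (hw ((a)::s').headI + (((b-1)::t')).headI.natAbs)
        (by simp only [List.headI] at hK ⊢; have := hw_spec a; have := hw_spec (a+1); have := hw_spec (a-1); omega)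
        ((a)::s') ((b-1)::t') (by simpa using hN) le_rfl
      rw [H1, H2] at key
      have hmem : m (bs (a::s')) (bs (b::t')) ∈ Finsupp.supported ℚ ℚ
          {l : List ℤ | l ≠ []} := by
        refine Finsupp.supported_mono (len_sub_ne (n := (a::s').length + (b::t').length)
          (by simp)) ?_
        rw [Finsupp.mem_supported]
        intro l hl
        exact h4 (a::s') (b::t') l hl
      have : m (bs (a::s')) (bs (b::t')) = Imap (Jmap (m (bs (a::s')) (bs (b::t')))) :=
        (IJ hmem).symm
      rw [this, key, map_add, mu_pp a b ha hb s' t', add_comm]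

end Uniqueness

/-- There is a unique depth-graded associative product on ℋ_ℤ with unit `1` such that
(1) `[0,s⃗']⧢[t⃗] = [0, s⃗'⧢[t⃗]]`, (2) `[s⃗]⧢[0] = [0,s⃗]` for `s⃗` with positive first entry,
and (3) `J` is a derivation. -/
theorem extended_shuffle_exists_unique :
    ∃! m : HZ →ₗ[ℚ] HZ →ₗ[ℚ] HZ,
      (∀ x, m (bs []) x = x) ∧
      (∀ x, m x (bs []) = x) ∧
      (∀ a b c : HZ, m (m a b) c = m a (m b c)) ∧
      (∀ s t : List ℤ, ∀ l ∈ (m (bs s) (bs t)).support, l.length = s.length + t.length) ∧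
      (∀ s' t : List ℤ, m (bs (0 :: s')) (bs t) = preZ (m (bs s') (bs t))) ∧
      (∀ s₁ : ℤ, 0 < s₁ → ∀ s' : List ℤ, m (bs (s₁ :: s')) (bs [0]) = bs (0 :: s₁ :: s')) ∧
      (∀ a b : HZ, Jmap (m a b) = m (Jmap a) b + m a (Jmap b)) := by
  refine ⟨M, ⟨M_one_left, M_one_right, M_assoc, ?_, ?_, ?_, Jder⟩, ?_⟩
  · intro s t l hl
    rw [M_bs] at hl
    exact (Finsupp.mem_supported ℚ _).mp (mu_len s t) hl
  · intro s' t
    cases t with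
    | nil => rw [M_bs, M_bs, mu_nil', mu_nil', preZ_bs]
    | cons b t' => rw [M_bs, M_bs]; exact mu_zero s' b t'
  · intro a ha s'
    rw [M_bs]
    have h := mu_pz a ha s' []
    rw [mu_nil', preZ_bs] at h
    exact h
  · rintro m' ⟨u1, u2, u3, u4, u5, u6, u7⟩
    apply hz_ext2
    intro s t
    rw [M_bs]
    exact unique_aux u1 u2 u3 u4 u5 u6 u7 (s.length + t.length)
      (hw s.headI + t.headI.natAbs) s t le_rfl le_rfl
end
end

section
/- For distinct index sets and generalized Chen fractions g in variables {x_i : i ∈ M} and h in variables {x_j : j ∈ P} with M ∩ P = ∅, the product g·h is a ℤ-linear combination of generalized Chen fractions in the variable set indexed by M ∪ P, where the variable orderings appearing are shuffles of the orderings of g and h. -/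
/-- `IsShuffle u v w` means `w` is an interleaving of `u` and `v` preserving their orders. -/
inductive IsShuffle {α : Type*} : List α → List α → List α → Prop
  | nil : IsShuffle [] [] []
  | left {a : α} {u v w : List α} : IsShuffle u v w → IsShuffle (a :: u) v (a :: w)
  | right {a : α} {u v w : List α} : IsShuffle u v w → IsShuffle u (a :: v) (a :: w)

/-- The generalized Chen fraction `1/((x_{i₁}+⋯+x_{i_k})^{s₁}⋯x_{i_k}^{s_k})` as a function of
the variables, given the index list and the exponent list. -/
noncomputable def chenFrac (x : ℕ → ℝ) : List ℕ → List ℤ → ℝ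
  | [], _ => 1
  | _, [] => 1
  | i :: L, e :: E => (((i :: L).map x).sum ^ e)⁻¹ * chenFrac x L E


lemma chenFrac_nil_left (x : ℕ → ℝ) (E : List ℤ) : chenFrac x [] E = 1 := by
  cases E <;> rfl

lemma chenFrac_nil_right (x : ℕ → ℝ) (L : List ℕ) : chenFrac x L [] = 1 := by
  cases L <;> rfl

lemma chenFrac_cons (x : ℕ → ℝ) (i : ℕ) (L : List ℕ) (e : ℤ) (E : List ℤ) :
    chenFrac x (i :: L) (e :: E) = ((x i + (L.map x).sum) ^ e)⁻¹ * chenFrac x L E := by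
  simp [chenFrac]

lemma IsShuffle.sum_map {u v w : List ℕ} (x : ℕ → ℝ) (h : IsShuffle u v w) :
    (w.map x).sum = (u.map x).sum + (v.map x).sum := by
  induction h with
  | nil => simp
  | left h ih => simp [ih]; ring
  | right h ih => simp [ih]; ring

lemma isShuffle_nil_left (P : List ℕ) : IsShuffle ([] : List ℕ) P P := by
  induction P with
  | nil => exact .nil
  | cons a P ih => exact .right ih

lemma isShuffle_nil_right (M : List ℕ) : IsShuffle M ([] : List ℕ) M := by
  induction M with
  | nil => exact .nil
  | cons a M ih => exact .left ih

lemma IsShuffle.ne_nil_left {u v w : List ℕ} (h : IsShuffle u v w) (hu : u ≠ []) : w ≠ [] := by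
  cases h <;> simp_all

def ChenCond (M P : List ℕ) (x : ℕ → ℝ) : Prop :=
  ∀ T : Finset ℕ, T.Nonempty → T ⊆ (M ++ P).toFinset → ∑ i ∈ T, x i ≠ 0

def ChenRep (M P : List ℕ) (F : (ℕ → ℝ) → ℝ) : Prop :=
  ∃ (n : ℕ) (A : Fin n → ℤ) (w : Fin n → List ℕ) (u : Fin n → List ℤ),
    (∀ r, IsShuffle M P (w r)) ∧ (∀ r, (u r).length = (w r).length) ∧
    ∀ x : ℕ → ℝ, ChenCond M P x → F x = ∑ r, (A r : ℝ) * chenFrac x (w r) (u r)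

lemma ChenCond.consLeft {M P : List ℕ} {i : ℕ} {x : ℕ → ℝ} (h : ChenCond (i :: M) P x) : ChenCond M P x := by
  intro T hT hsub
  refine h T hT (hsub.trans ?_)
  intro a ha
  simp only [List.toFinset_append, Finset.mem_union, List.mem_toFinset] at ha ⊢
  rcases ha with ha | ha
  · exact Or.inl (List.mem_cons_of_mem _ ha)
  · exact Or.inr ha

lemma ChenCond.consRight {M P : List ℕ} {j : ℕ} {x : ℕ → ℝ} (h : ChenCond M (j :: P) x) : ChenCond M P x := by
  intro T hT hsub
  refine h T hT (hsub.trans ?_)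
  intro a ha
  simp only [List.toFinset_append, Finset.mem_union, List.mem_toFinset] at ha ⊢
  rcases ha with ha | ha
  · exact Or.inl ha
  · exact Or.inr (List.mem_cons_of_mem _ ha)

lemma ChenCond.sum_left {M P : List ℕ} {x : ℕ → ℝ} (h : ChenCond M P x) (hM : M ≠ [])
    (hMn : M.Nodup) : (M.map x).sum ≠ 0 := by
  have := h M.toFinset (List.toFinset_nonempty_iff M |>.2 hM)
    (by simp [List.toFinset_append])
  rwa [List.sum_toFinset _ hMn] at this

lemma ChenCond.sum_right {M P : List ℕ} {x : ℕ → ℝ} (h : ChenCond M P x) (hP : P ≠ [])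
    (hPn : P.Nodup) : (P.map x).sum ≠ 0 := by
  have := h P.toFinset (List.toFinset_nonempty_iff P |>.2 hP)
    (by simp [List.toFinset_append])
  rwa [List.sum_toFinset _ hPn] at this

lemma ChenCond.sum_total {M P : List ℕ} {x : ℕ → ℝ} (h : ChenCond M P x) (hM : M ≠ [])
    (hMn : M.Nodup) (hPn : P.Nodup) (hdisj : M.Disjoint P) :
    (M.map x).sum + (P.map x).sum ≠ 0 := by
  have hnd : (M ++ P).Nodup := hMn.append hPn hdisj
  have hne : (M ++ P) ≠ [] := by simp [hM]
  have := h (M ++ P).toFinset (List.toFinset_nonempty_iff _ |>.2 hne) subset_rfl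
  rwa [List.sum_toFinset _ hnd, List.map_append, List.sum_append] at this

lemma ChenRep.congr {M P : List ℕ} {F G : (ℕ → ℝ) → ℝ}
    (h : ∀ x, ChenCond M P x → F x = G x) (hG : ChenRep M P G) : ChenRep M P F := by
  obtain ⟨n, A, w, u, hw, hu, heq⟩ := hG
  exact ⟨n, A, w, u, hw, hu, fun x hx => (h x hx).trans (heq x hx)⟩

lemma ChenRep.zero {M P : List ℕ} : ChenRep M P (fun _ => 0) :=
  ⟨0, fun r => r.elim0, fun r => r.elim0, fun r => r.elim0,
    fun r => r.elim0, fun r => r.elim0, fun x _ => by simp⟩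

lemma ChenRep.smul {M P : List ℕ} {F : (ℕ → ℝ) → ℝ} (c : ℤ) (h : ChenRep M P F) :
    ChenRep M P (fun x => (c : ℝ) * F x) := by
  obtain ⟨n, A, w, u, hw, hu, heq⟩ := h
  refine ⟨n, fun r => c * A r, w, u, hw, hu, fun x hx => ?_⟩
  show (c : ℝ) * F x = _
  rw [heq x hx, Finset.mul_sum]
  refine Finset.sum_congr rfl fun r _ => ?_
  push_cast; ring

lemma ChenRep.add {M P : List ℕ} {F G : (ℕ → ℝ) → ℝ} (hF : ChenRep M P F)
    (hG : ChenRep M P G) : ChenRep M P (fun x => F x + G x) := by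
  obtain ⟨n, A, w, u, hw, hu, heq⟩ := hF
  obtain ⟨n', A', w', u', hw', hu', heq'⟩ := hG
  refine ⟨n + n', Fin.addCases A A', Fin.addCases w w', Fin.addCases u u', ?_, ?_, ?_⟩
  · intro r
    refine Fin.addCases (fun i => ?_) (fun i => ?_) r <;> simp [hw, hw']
  · intro r
    refine Fin.addCases (fun i => ?_) (fun i => ?_) r <;> simp [hu, hu']
  · intro x hx
    show F x + G x = _
    rw [heq x hx, heq' x hx, Fin.sum_univ_add]
    simp

lemma ChenRep.finsetSum {M P : List ℕ} {ι : Type*} (S : Finset ι) (F : ι → (ℕ → ℝ) → ℝ)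
    (h : ∀ k ∈ S, ChenRep M P (F k)) : ChenRep M P (fun x => ∑ k ∈ S, F k x) := by
  classical
  induction S using Finset.cons_induction with
  | empty => exact ChenRep.congr (fun x _ => by simp) ChenRep.zero
  | cons a S ha ih =>
    refine ChenRep.congr (fun x _ => Finset.sum_cons ha) ?_
    exact ChenRep.add (h a (Finset.mem_cons_self a S))
      (ih fun k hk => h k (Finset.mem_cons_of_mem hk))

lemma ChenRep.consLeft {M P : List ℕ} {F : (ℕ → ℝ) → ℝ} (i : ℕ) (k : ℤ)
    (h : ChenRep M P F) :
    ChenRep (i :: M) P (fun x =>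
      ((((i :: M).map x).sum + (P.map x).sum) ^ k)⁻¹ * F x) := by
  obtain ⟨n, A, w, u, hw, hu, heq⟩ := h
  refine ⟨n, A, fun r => i :: w r, fun r => k :: u r,
    fun r => .left (hw r), fun r => by simp [hu r], fun x hx => ?_⟩
  show ((((i :: M).map x).sum + (P.map x).sum) ^ k)⁻¹ * F x = _
  rw [heq x hx.consLeft, Finset.mul_sum]
  refine Finset.sum_congr rfl fun r _ => ?_
  rw [chenFrac_cons, (hw r).sum_map x]
  simp only [List.map_cons, List.sum_cons]
  ring

lemma ChenRep.consRight {M P : List ℕ} {F : (ℕ → ℝ) → ℝ} (j : ℕ) (k : ℤ)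
    (h : ChenRep M P F) :
    ChenRep M (j :: P) (fun x =>
      (((M.map x).sum + ((j :: P).map x).sum) ^ k)⁻¹ * F x) := by
  obtain ⟨n, A, w, u, hw, hu, heq⟩ := h
  refine ⟨n, A, fun r => j :: w r, fun r => k :: u r,
    fun r => .right (hw r), fun r => by simp [hu r], fun x hx => ?_⟩
  show (((M.map x).sum + ((j :: P).map x).sum) ^ k)⁻¹ * F x = _
  rw [heq x hx.consRight, Finset.mul_sum]
  refine Finset.sum_congr rfl fun r _ => ?_
  rw [chenFrac_cons, (hw r).sum_map x]
  simp only [List.map_cons, List.sum_cons]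
  ring_nf

lemma ChenRep.bump {M P : List ℕ} {F : (ℕ → ℝ) → ℝ} (hM : M ≠ []) (hMn : M.Nodup)
    (hPn : P.Nodup) (hdisj : M.Disjoint P) (h : ChenRep M P F) :
    ChenRep M P (fun x => ((M.map x).sum + (P.map x).sum)⁻¹ * F x) := by
  obtain ⟨n, A, w, u, hw, hu, heq⟩ := h
  have hune : ∀ r, ∃ e E, u r = e :: E := by
    intro r
    have hwne := (hw r).ne_nil_left hM
    cases hur : u r with
    | nil =>
      exfalso
      apply hwne
      apply List.length_eq_zero_iff.mp
      rw [← hu r, hur]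
      rfl
    | cons e E => exact ⟨e, E, rfl⟩
  refine ⟨n, A, w, fun r => ((u r).headI + 1) :: (u r).tail,
    hw, fun r => ?_, fun x hx => ?_⟩
  · obtain ⟨e, E, hur⟩ := hune r
    simp [hur, ← hu r]
  · show ((M.map x).sum + (P.map x).sum)⁻¹ * F x = _
    rw [heq x hx, Finset.mul_sum]
    refine Finset.sum_congr rfl fun r _ => ?_
    have hwne := (hw r).ne_nil_left hM
    have hC : ((w r).map x).sum = (M.map x).sum + (P.map x).sum := (hw r).sum_map x
    have hC0 : ((M.map x).sum + (P.map x).sum) ≠ 0 := hx.sum_total hM hMn hPn hdisj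
    obtain ⟨c, W, hwr⟩ : ∃ c W, w r = c :: W := by
      cases hwr : w r with
      | nil => exact absurd hwr hwne
      | cons a l => exact ⟨a, l, rfl⟩
    obtain ⟨e, E, hur⟩ := hune r
    simp only [hwr, hur] at hC ⊢
    simp only [List.map_cons, List.sum_cons] at hC
    simp only [List.headI, List.tail, chenFrac_cons]
    rw [hC, zpow_add₀ hC0, zpow_one, mul_inv]
    ring

lemma chenRep_nil_left (P : List ℕ) (s t : List ℤ) (ht : t.length = P.length) :
    ChenRep [] P (fun x => chenFrac x [] s * chenFrac x P t) :=
  ⟨1, fun _ => 1, fun _ => P, fun _ => t, fun _ => isShuffle_nil_left P, fun _ => ht,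
    fun x _ => by simp [chenFrac_nil_left]⟩

lemma chenRep_nil_right (M : List ℕ) (s t : List ℤ) (hs : s.length = M.length) :
    ChenRep M [] (fun x => chenFrac x M s * chenFrac x [] t) :=
  ⟨1, fun _ => 1, fun _ => M, fun _ => s, fun _ => isShuffle_nil_right M, fun _ => hs,
    fun x _ => by simp [chenFrac_nil_left]⟩

lemma chenRep_caseA (i j : ℕ) (M' P' : List ℕ) (s' t' : List ℤ) (a b : ℤ) (ha : a ≤ 0)
    (hMn : (i :: M').Nodup) (hPn : (j :: P').Nodup)
    (hrec : ∀ e : ℤ, ChenRep M' (j :: P')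
      (fun x => chenFrac x M' s' * chenFrac x (j :: P') (e :: t'))) :
    ChenRep (i :: M') (j :: P')
      (fun x => chenFrac x (i :: M') (a :: s') * chenFrac x (j :: P') (b :: t')) := by
  set m : ℕ := (-a).toNat with hm
  have ham : a = -(m : ℤ) := by omega
  refine ChenRep.congr ?_ (ChenRep.finsetSum (Finset.range (m + 1)) (fun k x =>
    (((-1) ^ (m - k) * (m.choose k) : ℤ) : ℝ) *
      (((((i :: M').map x).sum + ((j :: P').map x).sum) ^ (-(k : ℤ)))⁻¹ *
        (chenFrac x M' s' * chenFrac x (j :: P') ((b - m + k) :: t')))) ?_)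
  swap
  · intro k _
    exact ((hrec (b - m + k)).consLeft i (-(k : ℤ))).smul _
  intro x hx
  have hB : ((j :: P').map x).sum ≠ 0 := hx.sum_right (by simp) hPn
  simp only [chenFrac_cons, List.map_cons, List.sum_cons] at hB ⊢
  set A : ℝ := x i + (List.map x M').sum with hA
  set B : ℝ := x j + (List.map x P').sum with hBdef
  have key : (A ^ a)⁻¹ = ((A + B) + (-B)) ^ m := by
    rw [ham, zpow_neg, inv_inv, zpow_natCast]
    ring_nf
  rw [key, add_pow, Finset.sum_mul, Finset.sum_mul]
  refine Finset.sum_congr rfl fun k hk => ?_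
  have hk' : k ≤ m := Nat.lt_succ_iff.mp (Finset.mem_range.mp hk)
  have h1 : ((A + B) ^ (-(k : ℤ)))⁻¹ = (A + B) ^ k := by
    rw [zpow_neg, inv_inv, zpow_natCast]
  have h2 : (B ^ (b - m + k))⁻¹ = B ^ (m - k) * (B ^ b)⁻¹ := by
    rw [← zpow_natCast B (m - k), ← zpow_neg, ← zpow_neg, ← zpow_add₀ hB]
    congr 1
    push_cast [Nat.cast_sub hk']
    ring
  rw [h1, h2, neg_pow]
  push_cast
  ring

lemma chenRep_caseB (i j : ℕ) (M' P' : List ℕ) (s' t' : List ℤ) (a b : ℤ) (hb : b ≤ 0)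
    (hMn : (i :: M').Nodup) (hPn : (j :: P').Nodup)
    (hrec : ∀ e : ℤ, ChenRep (i :: M') P'
      (fun x => chenFrac x (i :: M') (e :: s') * chenFrac x P' t')) :
    ChenRep (i :: M') (j :: P')
      (fun x => chenFrac x (i :: M') (a :: s') * chenFrac x (j :: P') (b :: t')) := by
  set m : ℕ := (-b).toNat with hm
  have hbm : b = -(m : ℤ) := by omega
  refine ChenRep.congr ?_ (ChenRep.finsetSum (Finset.range (m + 1)) (fun k x =>
    (((-1) ^ (m - k) * (m.choose k) : ℤ) : ℝ) *
      (((((i :: M').map x).sum + ((j :: P').map x).sum) ^ (-(k : ℤ)))⁻¹ *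
        (chenFrac x (i :: M') ((a - m + k) :: s') * chenFrac x P' t'))) ?_)
  swap
  · intro k _
    exact ((hrec (a - m + k)).consRight j (-(k : ℤ))).smul _
  intro x hx
  have hA : ((i :: M').map x).sum ≠ 0 := hx.sum_left (by simp) hMn
  simp only [chenFrac_cons, List.map_cons, List.sum_cons] at hA ⊢
  set A : ℝ := x i + (List.map x M').sum with hAdef
  set B : ℝ := x j + (List.map x P').sum with hBdef
  have key : (B ^ b)⁻¹ = ((A + B) + (-A)) ^ m := by
    rw [hbm, zpow_neg, inv_inv, zpow_natCast]
    ring_nf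
  rw [key, add_pow, Finset.sum_mul, Finset.mul_sum]
  refine Finset.sum_congr rfl fun k hk => ?_
  have hk' : k ≤ m := Nat.lt_succ_iff.mp (Finset.mem_range.mp hk)
  have h1 : ((A + B) ^ (-(k : ℤ)))⁻¹ = (A + B) ^ k := by
    rw [zpow_neg, inv_inv, zpow_natCast]
  have h2 : (A ^ (a - m + k))⁻¹ = A ^ (m - k) * (A ^ a)⁻¹ := by
    rw [← zpow_natCast A (m - k), ← zpow_neg, ← zpow_neg, ← zpow_add₀ hA]
    congr 1
    push_cast [Nat.cast_sub hk']
    ring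
  rw [h1, h2, neg_pow]
  push_cast
  ring

lemma chenRep_prod (N : ℕ) : ∀ (M P : List ℕ) (s t : List ℤ), M.Nodup → P.Nodup →
    M.Disjoint P → s.length = M.length → t.length = P.length → M.length + P.length ≤ N →
    ChenRep M P (fun x => chenFrac x M s * chenFrac x P t) := by
  induction N with
  | zero =>
    intro M P s t _ _ _ _ ht hlen
    have hM : M = [] := by cases M <;> simp_all
    subst hM
    exact chenRep_nil_left P s t ht
  | succ N IH =>
    intro M P s t hMn hPn hdisj hs ht hlen
    cases M with
    | nil => exact chenRep_nil_left P s t ht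
    | cons i M' =>
      cases P with
      | nil => exact chenRep_nil_right _ s t hs
      | cons j P' =>
        obtain ⟨a, s', rfl⟩ : ∃ a s'', s = a :: s'' := by
          cases s with
          | nil => simp at hs
          | cons a s'' => exact ⟨a, s'', rfl⟩
        obtain ⟨b, t', rfl⟩ : ∃ b t'', t = b :: t'' := by
          cases t with
          | nil => simp at ht
          | cons b t'' => exact ⟨b, t'', rfl⟩
        simp only [List.length_cons] at hs ht hlen
        have hs' : s'.length = M'.length := by omega
        have ht' : t'.length = P'.length := by omega
        have hM'n : M'.Nodup := hMn.of_cons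
        have hP'n : P'.Nodup := hPn.of_cons
        have hdisjA : M'.Disjoint (j :: P') := fun y hy => hdisj (List.mem_cons_of_mem i hy)
        have hdisjB : (i :: M').Disjoint P' := fun y hy h'y =>
          hdisj hy (List.mem_cons_of_mem j h'y)
        have hrecA : ∀ e : ℤ, ChenRep M' (j :: P')
            (fun x => chenFrac x M' s' * chenFrac x (j :: P') (e :: t')) := by
          intro e
          exact IH M' (j :: P') s' (e :: t') hM'n hPn hdisjA hs' (by simp [ht']) (by simp; omega)
        have hrecB : ∀ e : ℤ, ChenRep (i :: M') P'
            (fun x => chenFrac x (i :: M') (e :: s') * chenFrac x P' t') := by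
          intro e
          exact IH (i :: M') P' (e :: s') t' hMn hP'n hdisjB (by simp [hs']) ht' (by simp; omega)
        have inner : ∀ (κ : ℕ) (a b : ℤ), a.toNat + b.toNat ≤ κ →
            ChenRep (i :: M') (j :: P')
              (fun x => chenFrac x (i :: M') (a :: s') * chenFrac x (j :: P') (b :: t')) := by
          intro κ
          induction κ with
          | zero =>
            intro a b hab
            exact chenRep_caseA i j M' P' s' t' a b (by omega) hMn hPn hrecA
          | succ κ ihκ =>
            intro a b hab
            by_cases ha : a ≤ 0
            · exact chenRep_caseA i j M' P' s' t' a b ha hMn hPn hrecA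
            by_cases hb : b ≤ 0
            · exact chenRep_caseB i j M' P' s' t' a b hb hMn hPn hrecB
            have h1 := ihκ (a - 1) b (by omega)
            have h2 := ihκ a (b - 1) (by omega)
            refine ChenRep.congr ?_ (ChenRep.bump (by simp) hMn hPn hdisj (h1.add h2))
            intro x hx
            have hA : ((i :: M').map x).sum ≠ 0 := hx.sum_left (by simp) hMn
            have hB : ((j :: P').map x).sum ≠ 0 := hx.sum_right (by simp) hPn
            have hC : ((i :: M').map x).sum + ((j :: P').map x).sum ≠ 0 :=
              hx.sum_total (by simp) hMn hPn hdisj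
            simp only [chenFrac_cons, List.map_cons, List.sum_cons] at hA hB hC ⊢
            set A : ℝ := x i + (List.map x M').sum
            set B : ℝ := x j + (List.map x P').sum
            have hAa : A ^ a ≠ 0 := zpow_ne_zero _ hA
            have hBb : B ^ b ≠ 0 := zpow_ne_zero _ hB
            rw [show a = (a - 1) + 1 by ring, show b = ((b - 1) + 1) by ring]
            rw [zpow_add₀ hA, zpow_add₀ hB, zpow_one]
            have hAa' : A ^ (a - 1) ≠ 0 := zpow_ne_zero _ hA
            have hBb' : B ^ (b - 1) ≠ 0 := zpow_ne_zero _ hB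
            field_simp
            ring
        exact inner (a.toNat + b.toNat) a b le_rfl

/-- The product of two generalized Chen fractions in disjoint variable sets is an integer linear
combination of generalized Chen fractions whose variable orderings are shuffles of the two. -/
theorem chen_fraction_product (M P : List ℕ) (s t : List ℤ)
    (hM : M ≠ []) (hP : P ≠ []) (hMn : M.Nodup) (hPn : P.Nodup) (hdisj : M.Disjoint P)
    (hs : s.length = M.length) (ht : t.length = P.length) :
    ∃ (n : ℕ) (A : Fin n → ℤ) (w : Fin n → List ℕ) (u : Fin n → List ℤ),
      (∀ r, IsShuffle M P (w r)) ∧ (∀ r, (u r).length = (w r).length) ∧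
      ∀ x : ℕ → ℝ,
        (∀ T : Finset ℕ, T.Nonempty → T ⊆ (M ++ P).toFinset → ∑ i ∈ T, x i ≠ 0) →
        chenFrac x M s * chenFrac x P t = ∑ r, (A r : ℝ) * chenFrac x (w r) (u r) := by
  obtain ⟨n, A, w, u, hw, hu, heq⟩ :=
    chenRep_prod (M.length + P.length) M P s t hMn hPn hdisj hs ht le_rfl
  exact ⟨n, A, w, u, hw, hu, fun x hx => heq x hx⟩
end

section
/- In every basis element [r⃗; w⃗] appearing with nonzero coefficient in the product [s⃗; u⃗] ⧢ [t⃗; v⃗] of two two-row symbols, the bottom row w⃗ is a shuffle of u⃗ and v⃗. -/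
noncomputable section

/-- The space with basis the two-row symbols: lists of columns `(sᵢ, uᵢ)` with `sᵢ ∈ ℤ` and
`uᵢ ∈ ℤ≥1`. -/
abbrev H2 : Type := List (ℤ × ℕ+) →₀ ℚ

/-- The basis two-row symbol. -/
def bs2 (l : List (ℤ × ℕ+)) : H2 := Finsupp.single l 1

/-- Linear extension of a map defined on two-row basis symbols. -/
def hlift2 (f : List (ℤ × ℕ+) → H2) : H2 →ₗ[ℚ] H2 := Finsupp.lift H2 ℚ (List (ℤ × ℕ+)) f

/-- Prepending a column to every basis symbol. -/
def pre2 (c : ℤ × ℕ+) : H2 →ₗ[ℚ] H2 := hlift2 fun l => bs2 (c :: l)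

/-- The operator `I^S` adding 1 to the first top-row entry. -/
def I2 : H2 →ₗ[ℚ] H2 := hlift2 fun l =>
  match l with
  | [] => 0
  | (s, u) :: r => bs2 ((s + 1, u) :: r)

/-- The operator `J^S` subtracting 1 from the first top-row entry, with `J^S(1) = 0`. -/
def J2 : H2 →ₗ[ℚ] H2 := hlift2 fun l =>
  match l with
  | [] => 0
  | (s, u) :: r => bs2 ((s - 1, u) :: r)

/-- The five-case recursion defining the extended shuffle product on two-row symbols. -/
def IsExtShuffle2 (m : H2 →ₗ[ℚ] H2 →ₗ[ℚ] H2) : Prop :=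
  (∀ x, m (bs2 []) x = x) ∧
  (∀ x, m x (bs2 []) = x) ∧
  (∀ (u₁ : ℕ+) (p' : List (ℤ × ℕ+)) (t₁ : ℤ) (v₁ : ℕ+) (q' : List (ℤ × ℕ+)),
    m (bs2 ((0, u₁) :: p')) (bs2 ((t₁, v₁) :: q')) =
      pre2 (0, u₁) (m (bs2 p') (bs2 ((t₁, v₁) :: q')))) ∧
  (∀ (s₁ : ℤ), 0 < s₁ → ∀ (u₁ v₁ : ℕ+) (p' q' : List (ℤ × ℕ+)),
    m (bs2 ((s₁, u₁) :: p')) (bs2 ((0, v₁) :: q')) =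
      pre2 (0, v₁) (m (bs2 ((s₁, u₁) :: p')) (bs2 q'))) ∧
  (∀ (s₁ t₁ : ℤ), 0 < s₁ → 0 < t₁ → ∀ (u₁ v₁ : ℕ+) (p' q' : List (ℤ × ℕ+)),
    m (bs2 ((s₁, u₁) :: p')) (bs2 ((t₁, v₁) :: q')) =
      I2 (m (bs2 ((s₁, u₁) :: p')) (bs2 ((t₁ - 1, v₁) :: q'))) +
      I2 (m (bs2 ((s₁ - 1, u₁) :: p')) (bs2 ((t₁, v₁) :: q')))) ∧
  (∀ (s₁ t₁ : ℤ), 0 < s₁ → t₁ < 0 → ∀ (u₁ v₁ : ℕ+) (p' q' : List (ℤ × ℕ+)),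
    m (bs2 ((s₁, u₁) :: p')) (bs2 ((t₁, v₁) :: q')) =
      J2 (m (bs2 ((s₁, u₁) :: p')) (bs2 ((t₁ + 1, v₁) :: q'))) -
      m (bs2 ((s₁ - 1, u₁) :: p')) (bs2 ((t₁ + 1, v₁) :: q'))) ∧
  (∀ (s₁ : ℤ), s₁ < 0 → ∀ (t₁ : ℤ) (u₁ v₁ : ℕ+) (p' q' : List (ℤ × ℕ+)),
    m (bs2 ((s₁, u₁) :: p')) (bs2 ((t₁, v₁) :: q')) =
      J2 (m (bs2 ((s₁ + 1, u₁) :: p')) (bs2 ((t₁, v₁) :: q'))) -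
      m (bs2 ((s₁ + 1, u₁) :: p')) (bs2 ((t₁ - 1, v₁) :: q')))

lemma supp_hlift2 {f : List (ℤ × ℕ+) → H2} {x : H2} {r : List (ℤ × ℕ+)}
    (hr : r ∈ (hlift2 f x).support) : ∃ l ∈ x.support, r ∈ (f l).support := by
  unfold hlift2 at hr
  rw [Finsupp.lift_apply] at hr
  have := Finsupp.support_sum hr
  rw [Finset.mem_biUnion] at this
  obtain ⟨l, hl, hrl⟩ := this
  exact ⟨l, hl, Finsupp.support_smul hrl⟩

lemma supp_bs2 {l r : List (ℤ × ℕ+)} (h : r ∈ (bs2 l).support) : r = l := by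
  unfold bs2 at h
  have := Finsupp.support_single_subset h
  simpa using this

lemma supp_pre2 {c : ℤ × ℕ+} {x : H2} {r : List (ℤ × ℕ+)} (hr : r ∈ (pre2 c x).support) :
    ∃ l ∈ x.support, r = c :: l := by
  obtain ⟨l, hl, hrl⟩ := supp_hlift2 hr
  exact ⟨l, hl, supp_bs2 hrl⟩

lemma supp_I2 {x : H2} {r : List (ℤ × ℕ+)} (hr : r ∈ (I2 x).support) :
    ∃ l ∈ x.support, r.map Prod.snd = l.map Prod.snd := by
  obtain ⟨l, hl, hrl⟩ := supp_hlift2 hr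
  refine ⟨l, hl, ?_⟩
  match l with
  | [] => simp at hrl
  | (s, u) :: rest =>
    have := supp_bs2 hrl
    subst this; simp

lemma supp_J2 {x : H2} {r : List (ℤ × ℕ+)} (hr : r ∈ (J2 x).support) :
    ∃ l ∈ x.support, r.map Prod.snd = l.map Prod.snd := by
  obtain ⟨l, hl, hrl⟩ := supp_hlift2 hr
  refine ⟨l, hl, ?_⟩
  match l with
  | [] => simp at hrl
  | (s, u) :: rest =>
    have := supp_bs2 hrl
    subst this; simp

lemma isShuffle_nil_left_s15 {α : Type*} (l : List α) : IsShuffle [] l l := by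
  induction l with
  | nil => exact .nil
  | cons a t ih => exact .right ih

lemma isShuffle_nil_right_s15 {α : Type*} (l : List α) : IsShuffle l [] l := by
  induction l with
  | nil => exact .nil
  | cons a t ih => exact .left ih

/-- Head weight used as termination measure. -/
def hd2wt : List (ℤ × ℕ+) → List (ℤ × ℕ+) → ℕ
  | [], _ => 0
  | _, [] => 0
  | (s, _) :: _, (t, _) :: _ => 2 * s.natAbs + t.natAbs

@[simp] lemma hd2wt_cons (s t : ℤ) (u v : ℕ+) (p q : List (ℤ × ℕ+)) :
    hd2wt ((s, u) :: p) ((t, v) :: q) = 2 * s.natAbs + t.natAbs := rfl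

lemma bottom_row_shuffle_aux (m2 : H2 →ₗ[ℚ] H2 →ₗ[ℚ] H2) (hm2 : IsExtShuffle2 m2) :
    ∀ N W (p q : List (ℤ × ℕ+)), p.length + q.length ≤ N → hd2wt p q ≤ W →
    ∀ r ∈ (m2 (bs2 p) (bs2 q)).support,
      IsShuffle (p.map Prod.snd) (q.map Prod.snd) (r.map Prod.snd) := by
  obtain ⟨h1, h2, h3, h4, h5, h6, h7⟩ := hm2
  intro N
  induction N with
  | zero =>
    intro W p q hN _ r hr
    match p, q with
    | [], [] =>
      rw [h1] at hr
      have := supp_bs2 hr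
      subst this
      exact .nil
    | a :: p', q => simp at hN
    | p, a :: q' => simp at hN
  | succ n ihN =>
    intro W
    induction W with
    | zero =>
      intro p q hN hW r hr
      match p, q with
      | [], q =>
        rw [h1] at hr
        have := supp_bs2 hr
        subst this
        exact isShuffle_nil_left_s15 _
      | a :: p', [] =>
        rw [h2] at hr
        have := supp_bs2 hr
        subst this
        exact isShuffle_nil_right_s15 _
      | (s₁, u₁) :: p', (t₁, v₁) :: q' =>
        have hs : s₁ = 0 := by rw [hd2wt_cons] at hW; omega
        subst hs
        rw [h3] at hr
        obtain ⟨l, hl, hrl⟩ := supp_pre2 hr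
        subst hrl
        have hlen : p'.length + ((t₁, v₁) :: q').length ≤ n := by simp at hN ⊢; omega
        exact .left (ihN (hd2wt p' ((t₁, v₁) :: q')) p' _ hlen le_rfl l hl)
    | succ w ihW =>
      intro p q hN hW r hr
      match p, q with
      | [], q =>
        rw [h1] at hr
        have := supp_bs2 hr
        subst this
        exact isShuffle_nil_left_s15 _
      | a :: p', [] =>
        rw [h2] at hr
        have := supp_bs2 hr
        subst this
        exact isShuffle_nil_right_s15 _
      | (s₁, u₁) :: p', (t₁, v₁) :: q' =>
        rw [hd2wt_cons] at hW
        rcases lt_trichotomy s₁ 0 with hs | hs | hs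
        · -- s₁ < 0
          rw [h7 s₁ hs] at hr
          have hr' := Finsupp.support_sub hr
          rw [Finset.mem_union] at hr'
          rcases hr' with hr' | hr'
          · obtain ⟨l, hl, hrl⟩ := supp_J2 hr'
            have := ihW ((s₁ + 1, u₁) :: p') ((t₁, v₁) :: q') (by simpa using hN)
              (by rw [hd2wt_cons]; omega) l hl
            simpa [hrl] using this
          · have := ihW ((s₁ + 1, u₁) :: p') ((t₁ - 1, v₁) :: q') (by simpa using hN)
              (by rw [hd2wt_cons]; omega) r hr'
            simpa using this
        · -- s₁ = 0
          subst hs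
          rw [h3] at hr
          obtain ⟨l, hl, hrl⟩ := supp_pre2 hr
          subst hrl
          have hlen : p'.length + ((t₁, v₁) :: q').length ≤ n := by simp at hN ⊢; omega
          exact .left (ihN (hd2wt p' ((t₁, v₁) :: q')) p' _ hlen le_rfl l hl)
        · -- s₁ > 0
          rcases lt_trichotomy t₁ 0 with ht | ht | ht
          · -- t₁ < 0
            rw [h6 s₁ t₁ hs ht] at hr
            have hr' := Finsupp.support_sub hr
            rw [Finset.mem_union] at hr'
            rcases hr' with hr' | hr'
            · obtain ⟨l, hl, hrl⟩ := supp_J2 hr'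
              have := ihW ((s₁, u₁) :: p') ((t₁ + 1, v₁) :: q') (by simpa using hN)
                (by rw [hd2wt_cons]; omega) l hl
              simpa [hrl] using this
            · have := ihW ((s₁ - 1, u₁) :: p') ((t₁ + 1, v₁) :: q') (by simpa using hN)
                (by rw [hd2wt_cons]; omega) r hr'
              simpa using this
          · -- t₁ = 0
            subst ht
            rw [h4 s₁ hs] at hr
            obtain ⟨l, hl, hrl⟩ := supp_pre2 hr
            subst hrl
            have hlen : ((s₁, u₁) :: p').length + q'.length ≤ n := by simp at hN ⊢; omega
            exact .right (ihN (hd2wt ((s₁, u₁) :: p') q') _ q' hlen le_rfl l hl)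
          · -- t₁ > 0
            rw [h5 s₁ t₁ hs ht] at hr
            have hr' := Finsupp.support_add hr
            rw [Finset.mem_union] at hr'
            rcases hr' with hr' | hr'
            · obtain ⟨l, hl, hrl⟩ := supp_I2 hr'
              have := ihW ((s₁, u₁) :: p') ((t₁ - 1, v₁) :: q') (by simpa using hN)
                (by rw [hd2wt_cons]; omega) l hl
              simpa [hrl] using this
            · obtain ⟨l, hl, hrl⟩ := supp_I2 hr'
              have := ihW ((s₁ - 1, u₁) :: p') ((t₁, v₁) :: q') (by simpa using hN)
                (by rw [hd2wt_cons]; omega) l hl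
              simpa [hrl] using this

/-- In every basis element appearing in the product of two two-row symbols, the bottom row is a
shuffle of the two bottom rows. -/
theorem bottom_row_shuffle (m2 : H2 →ₗ[ℚ] H2 →ₗ[ℚ] H2) (hm2 : IsExtShuffle2 m2)
    (p q : List (ℤ × ℕ+)) :
    ∀ r ∈ (m2 (bs2 p) (bs2 q)).support,
      IsShuffle (p.map Prod.snd) (q.map Prod.snd) (r.map Prod.snd) :=
  bottom_row_shuffle_aux m2 hm2 (p.length + q.length) (hd2wt p q) p q le_rfl le_rfl
end
end

section
/- Let s⃗ ∈ ℤ^m and t⃗ ∈ ℤ^p, and suppose [v⃗] appears with nonzero coefficient in [s⃗] ⧢ [t⃗]. Then for all 1 ≤ k ≤ m+p, the k-th partial weight satisfies w_k([v⃗]) ≥ min{ w̃_i([s⃗]) + w̃_j([t⃗]) : 0 ≤ i ≤ m, 0 ≤ j ≤ p, i+j = k }, where w̃ denotes the modified partial weight. -/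
noncomputable section

/-- The `k`-th partial weight `w_k([s⃗]) = s₁+⋯+s_k`. -/
def pw (l : List ℤ) (k : ℕ) : ℤ := (l.take k).sum

/-- The modified partial weight `w̃_k`: equal to `w_k` if `k` is the depth or the `(k+1)`-st
entry is positive, and to `w_{k+1}` if the `(k+1)`-st entry is `≤ 0`. -/
def mpw (l : List ℤ) (k : ℕ) : ℤ :=
  if h : k < l.length then (if l.get ⟨k, h⟩ ≤ 0 then pw l (k + 1) else pw l k) else pw l k

lemma mem_hlift_support {f : List ℤ → HZ} {x : HZ} {v : List ℤ}
    (h : v ∈ (hlift f x).support) : ∃ l ∈ x.support, v ∈ (f l).support := by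
  rw [hlift, Finsupp.lift_apply] at h
  obtain ⟨l, hl, hv⟩ := Finset.mem_biUnion.mp (Finsupp.support_sum h)
  exact ⟨l, hl, Finsupp.support_smul hv⟩

lemma mem_supp_bs {l v : List ℤ} (h : v ∈ (bs l).support) : v = l := by
  rw [bs, Finsupp.support_single_ne_zero _ one_ne_zero, Finset.mem_singleton] at h
  exact h

lemma mem_supp_preZ {x : HZ} {v : List ℤ} (h : v ∈ (preZ x).support) :
    ∃ l ∈ x.support, v = 0 :: l := by
  obtain ⟨l, hl, hv⟩ := mem_hlift_support h
  exact ⟨l, hl, mem_supp_bs hv⟩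

lemma mem_supp_Imap {x : HZ} {v : List ℤ} (h : v ∈ (Imap x).support) :
    ∃ c r, (c :: r) ∈ x.support ∧ v = (c + 1) :: r := by
  obtain ⟨l, hl, hv⟩ := mem_hlift_support h
  match l with
  | [] => simp at hv
  | c :: r => exact ⟨c, r, hl, mem_supp_bs hv⟩

lemma mem_supp_Jmap {x : HZ} {v : List ℤ} (h : v ∈ (Jmap x).support) :
    ∃ c r, (c :: r) ∈ x.support ∧ v = (c - 1) :: r := by
  obtain ⟨l, hl, hv⟩ := mem_hlift_support h
  match l with
  | [] => simp at hv
  | c :: r => exact ⟨c, r, hl, mem_supp_bs hv⟩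

lemma pw_zero (l : List ℤ) : pw l 0 = 0 := by simp [pw]

lemma pw_cons (c : ℤ) (r : List ℤ) (k : ℕ) : pw (c :: r) (k + 1) = c + pw r k := by
  simp [pw]

lemma mpw_nil (k : ℕ) : mpw [] k = 0 := by simp [mpw, pw]

lemma mpw_zero (c : ℤ) (r : List ℤ) : mpw (c :: r) 0 = min c 0 := by
  simp only [mpw, pw]
  simp only [List.length_cons, Nat.zero_lt_succ, dif_pos]
  simp [List.take]
  omega

lemma mpw_zero_nonpos (l : List ℤ) : mpw l 0 ≤ 0 := by
  cases l with
  | nil => simp [mpw_nil]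
  | cons c r => rw [mpw_zero]; omega

lemma mpw_succ_cons (c : ℤ) (r : List ℤ) (k : ℕ) : mpw (c :: r) (k + 1) = c + mpw r k := by
  unfold mpw
  by_cases h : k < r.length
  · rw [dif_pos (by simpa using Nat.succ_lt_succ h), dif_pos h]
    simp only [List.get_cons_succ, pw_cons]
    split <;> ring
  · rw [dif_neg (by simpa using h), dif_neg h, pw_cons]

lemma mpw_le_pw (l : List ℤ) (k : ℕ) : mpw l k ≤ pw l k := by
  unfold mpw
  split
  · next h =>
    split
    · next hg =>
      have e : pw l (k + 1) = pw l k + l.get ⟨k, h⟩ := List.sum_take_succ l k h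
      rw [e]
      linarith
    · exact le_refl _
  · exact le_refl _

lemma L1 (c : ℤ) (hc : c < 0) (r : List ℤ) (i : ℕ) :
    mpw (c :: r) i + 1 = mpw ((c + 1) :: r) i := by
  cases i with
  | zero => rw [mpw_zero, mpw_zero]; omega
  | succ k => rw [mpw_succ_cons, mpw_succ_cons]; ring

lemma L2 (c : ℤ) (r : List ℤ) (i : ℕ) :
    mpw (c :: r) i ≤ mpw ((c - 1) :: r) i + 1 := by
  cases i with
  | zero => rw [mpw_zero, mpw_zero]; omega
  | succ k => rw [mpw_succ_cons, mpw_succ_cons]; linarith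

lemma key (m : HZ →ₗ[ℚ] HZ →ₗ[ℚ] HZ) (hm : IsExtShuffle m) :
    ∀ (N M : ℕ) (s t v : List ℤ), s.length + t.length ≤ N →
      2 * s.headI.natAbs + t.headI.natAbs ≤ M →
      v ∈ (m (bs s) (bs t)).support → ∀ k : ℕ, 1 ≤ k → k ≤ s.length + t.length →
      ∃ i j : ℕ, i + j = k ∧ i ≤ s.length ∧ j ≤ t.length ∧ mpw s i + mpw t j ≤ pw v k := by
  obtain ⟨h1, h2, h3, h4, h5, h6, h7⟩ := hm
  intro N
  induction N using Nat.strong_induction_on with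
  | _ N ihN =>
  intro M
  induction M using Nat.strong_induction_on with
  | _ M ihM =>
  intro s t v hN hM hv k hk1 hk2
  rcases s with _ | ⟨s₁, s'⟩
  · -- s = []
    rw [h1] at hv
    have hvt := mem_supp_bs hv
    refine ⟨0, k, by omega, by omega, by simpa using hk2, ?_⟩
    rw [hvt]
    have e1 := mpw_le_pw t k
    have e2 := mpw_nil 0
    linarith
  rcases t with _ | ⟨t₁, t'⟩
  · -- t = []
    rw [h2] at hv
    have hvt := mem_supp_bs hv
    refine ⟨k, 0, by omega, by simpa using hk2, by omega, ?_⟩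
    rw [hvt]
    have e1 := mpw_le_pw (s₁ :: s') k
    have e2 := mpw_nil 0
    linarith
  rcases lt_trichotomy s₁ 0 with hs | hs | hs
  · -- s₁ < 0 : case 7
    rw [h7 s₁ hs t₁ s' t'] at hv
    have hN' : ((s₁ + 1) :: s').length + ((t₁ - 1) :: t').length ≤ N := by simpa using hN
    rcases Finset.mem_union.mp (Finsupp.support_sub hv) with hv' | hv'
    · obtain ⟨c, r, hu, rfl⟩ := mem_supp_Jmap hv'
      have hlt : 2 * (((s₁ + 1) :: s').headI).natAbs + ((t₁ :: t').headI).natAbs < M := by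
        simp only [List.headI] at hM ⊢; omega
      obtain ⟨i, j, hij, hi, hj, hle⟩ :=
        ihM _ hlt ((s₁ + 1) :: s') (t₁ :: t') (c :: r) (by simpa using hN) le_rfl hu k hk1
          (by simpa using hk2)
      obtain ⟨k', rfl⟩ : ∃ k', k = k' + 1 := ⟨k - 1, by omega⟩
      refine ⟨i, j, hij, by simpa using hi, hj, ?_⟩
      have e1 : pw ((c - 1) :: r) (k' + 1) = pw (c :: r) (k' + 1) - 1 := by
        rw [pw_cons, pw_cons]; ring
      have e2 := L1 s₁ hs s' i
      linarith
    · have hlt : 2 * (((s₁ + 1) :: s').headI).natAbs + (((t₁ - 1) :: t').headI).natAbs < M := by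
        simp only [List.headI] at hM ⊢; omega
      obtain ⟨i, j, hij, hi, hj, hle⟩ :=
        ihM _ hlt ((s₁ + 1) :: s') ((t₁ - 1) :: t') v hN' le_rfl hv' k hk1
          (by simpa using hk2)
      have e2 := L1 s₁ hs s' i
      have e3 := L2 t₁ t' j
      exact ⟨i, j, hij, by simpa using hi, by simpa using hj, by linarith⟩
  · -- s₁ = 0 : case 3
    subst hs
    rw [h3 s' t₁ t'] at hv
    obtain ⟨v', hv', rfl⟩ := mem_supp_preZ hv
    by_cases hk : k = 1
    · subst hk
      refine ⟨1, 0, rfl, by simp, by omega, ?_⟩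
      have e1 := mpw_succ_cons 0 s' 0
      have e2 := mpw_zero_nonpos s'
      have e3 := mpw_zero_nonpos (t₁ :: t')
      have e4 := pw_cons 0 v' 0
      have e5 := pw_zero v'
      norm_num at e1 e4
      linarith
    · obtain ⟨k', rfl⟩ : ∃ k', k = k' + 1 := ⟨k - 1, by omega⟩
      have hNlt : s'.length + (t₁ :: t').length < N := by simp at hN ⊢; omega
      obtain ⟨i, j, hij, hi, hj, hle⟩ :=
        ihN _ hNlt _ s' (t₁ :: t') v' le_rfl le_rfl hv' k' (by omega)
          (by simp at hk2 ⊢; omega)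
      refine ⟨i + 1, j, by omega, by simp; omega, hj, ?_⟩
      rw [mpw_succ_cons, pw_cons]
      linarith
  rcases lt_trichotomy t₁ 0 with ht | ht | ht
  · -- s₁ > 0, t₁ < 0 : case 6
    rw [h6 s₁ t₁ hs ht s' t'] at hv
    rcases Finset.mem_union.mp (Finsupp.support_sub hv) with hv' | hv'
    · obtain ⟨c, r, hu, rfl⟩ := mem_supp_Jmap hv'
      have hlt : 2 * ((s₁ :: s').headI).natAbs + (((t₁ + 1) :: t').headI).natAbs < M := by
        simp only [List.headI] at hM ⊢; omega
      obtain ⟨i, j, hij, hi, hj, hle⟩ :=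
        ihM _ hlt (s₁ :: s') ((t₁ + 1) :: t') (c :: r) (by simpa using hN) le_rfl hu k hk1
          (by simpa using hk2)
      obtain ⟨k', rfl⟩ : ∃ k', k = k' + 1 := ⟨k - 1, by omega⟩
      refine ⟨i, j, hij, hi, by simpa using hj, ?_⟩
      have e1 : pw ((c - 1) :: r) (k' + 1) = pw (c :: r) (k' + 1) - 1 := by
        rw [pw_cons, pw_cons]; ring
      have e2 := L1 t₁ ht t' j
      linarith
    · have hlt : 2 * (((s₁ - 1) :: s').headI).natAbs + (((t₁ + 1) :: t').headI).natAbs < M := by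
        simp only [List.headI] at hM ⊢; omega
      obtain ⟨i, j, hij, hi, hj, hle⟩ :=
        ihM _ hlt ((s₁ - 1) :: s') ((t₁ + 1) :: t') v (by simpa using hN) le_rfl hv' k hk1
          (by simpa using hk2)
      have e2 := L2 s₁ s' i
      have e3 := L1 t₁ ht t' j
      exact ⟨i, j, hij, by simpa using hi, by simpa using hj, by linarith⟩
  · -- s₁ > 0, t₁ = 0 : case 4
    subst ht
    rw [h4 s₁ hs s' t'] at hv
    obtain ⟨v', hv', rfl⟩ := mem_supp_preZ hv
    by_cases hk : k = 1
    · subst hk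
      refine ⟨0, 1, rfl, by omega, by simp, ?_⟩
      have e1 := mpw_succ_cons 0 t' 0
      have e2 := mpw_zero_nonpos t'
      have e3 := mpw_zero s₁ s'
      have e4 := pw_cons 0 v' 0
      have e5 := pw_zero v'
      have e6 : min s₁ 0 = 0 := by omega
      norm_num at e1 e4
      linarith
    · obtain ⟨k', rfl⟩ : ∃ k', k = k' + 1 := ⟨k - 1, by omega⟩
      have hNlt : (s₁ :: s').length + t'.length < N := by simp at hN ⊢; omega
      obtain ⟨i, j, hij, hi, hj, hle⟩ :=
        ihN _ hNlt _ (s₁ :: s') t' v' le_rfl le_rfl hv' k' (by omega)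
          (by simp at hk2 ⊢; omega)
      refine ⟨i, j + 1, by omega, hi, by simp; omega, ?_⟩
      rw [mpw_succ_cons, pw_cons]
      linarith
  · -- s₁ > 0, t₁ > 0 : case 5
    rw [h5 s₁ t₁ hs ht s' t'] at hv
    rcases Finset.mem_union.mp (Finsupp.support_add hv) with hv' | hv'
    · obtain ⟨c, r, hu, rfl⟩ := mem_supp_Imap hv'
      have hlt : 2 * ((s₁ :: s').headI).natAbs + (((t₁ - 1) :: t').headI).natAbs < M := by
        simp only [List.headI] at hM ⊢; omega
      obtain ⟨i, j, hij, hi, hj, hle⟩ :=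
        ihM _ hlt (s₁ :: s') ((t₁ - 1) :: t') (c :: r) (by simpa using hN) le_rfl hu k hk1
          (by simpa using hk2)
      obtain ⟨k', rfl⟩ : ∃ k', k = k' + 1 := ⟨k - 1, by omega⟩
      refine ⟨i, j, hij, hi, by simpa using hj, ?_⟩
      have e1 : pw ((c + 1) :: r) (k' + 1) = pw (c :: r) (k' + 1) + 1 := by
        rw [pw_cons, pw_cons]; ring
      have e2 := L2 t₁ t' j
      linarith
    · obtain ⟨c, r, hu, rfl⟩ := mem_supp_Imap hv'
      have hlt : 2 * (((s₁ - 1) :: s').headI).natAbs + ((t₁ :: t').headI).natAbs < M := by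
        simp only [List.headI] at hM ⊢; omega
      obtain ⟨i, j, hij, hi, hj, hle⟩ :=
        ihM _ hlt ((s₁ - 1) :: s') (t₁ :: t') (c :: r) (by simpa using hN) le_rfl hu k hk1
          (by simpa using hk2)
      obtain ⟨k', rfl⟩ : ∃ k', k = k' + 1 := ⟨k - 1, by omega⟩
      refine ⟨i, j, hij, by simpa using hi, hj, ?_⟩
      have e1 : pw ((c + 1) :: r) (k' + 1) = pw (c :: r) (k' + 1) + 1 := by
        rw [pw_cons, pw_cons]; ring
      have e2 := L2 s₁ s' i
      linarith

/-- Lower bound for partial weights of terms in the extended shuffle product: each partial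
weight of a term is at least the minimum of sums of modified partial weights. -/
theorem partial_weight_estimate (m : HZ →ₗ[ℚ] HZ →ₗ[ℚ] HZ) (hm : IsExtShuffle m)
    (s t : List ℤ) (v : List ℤ) (hv : v ∈ (m (bs s) (bs t)).support)
    (k : ℕ) (hk1 : 1 ≤ k) (hk2 : k ≤ s.length + t.length) :
    ∃ i j : ℕ, i + j = k ∧ i ≤ s.length ∧ j ≤ t.length ∧ mpw s i + mpw t j ≤ pw v k :=
  key m hm _ _ s t v le_rfl le_rfl hv k hk1 hk2
end
end
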